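/- arXiv:2103.13493 — 6 statements merged into one kernel-verified Lean document; each statement's English description precedes it below -/
import Mathlib

section
/- Let z^0 ∈ ℝ^n and define the DANA-D iteration z^{k+1} = z^k − α A_q(z^k) ∇g(z^k), where g(z) = Σ_{i=1}^n f_i(x^0_i + L_i z), H(x) = diag(f_i''(x_i)), and A_q(z) = Σ_{p=0}^q (I_n − L H(x^0 + Lz) L)^p. Assume there exists ε ∈ [0,1) such that for every x ∈ ℝ^n and every v ∈ ℝ^n with 1_n^⊤ v = 0, |v^⊤ (I_n − L H(x) L) v| ≤ ε ‖v‖². Then for any q ∈ ℕ and any step size 0 < α < 2(1−ε)/((n−1)(1+ε)(1−ε^{q+1})), the sequence (z^k) converges to the unique minimizer z* of g satisfying 1_n^⊤ z* = 1_n^⊤ z^0. -/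
/-!
By Taylor's theorem, `g (u + d) - g u - ⟪d, ∇g u⟫ = ½ (L d)ᵀ H(ξ) (L d) = ½ (‖d‖² - dᵀ M d)` with
`M = I - L H(ξ) L`, so the spectral assumption makes `g` `(1 - ε)`-strongly convex and
`(1 + ε)`-smooth along `1ᗮ`, the directions in which the iteration moves. Extending `M` from `1ᗮ`
to a symmetric matrix with numerical range in `[-ε, ε]`, the spectral theorem puts the spectrum of
`A_q = Σ_{p ≤ q} M^p` on `1ᗮ` inside `[(1 - ε^{q+1}) / (1 + ε), Σ_{p ≤ q} ε^p]`; for the given step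
sizes every step then decreases `g` by at least `c ‖∇g(z^k)‖²` with `c > 0`. Since `g` is bounded
below on `z⁰ + 1ᗮ`, `∇g(z^k) → 0`, and strong monotonicity of `∇g` makes `(z^k)` Cauchy. Its limit
is a critical point, hence the unique minimizer on `z⁰ + 1ᗮ`, and `g` is invariant under adding
multiples of `1`, so it is a global minimizer.
-/

open Filter Matrix Polynomial Finset Topology

section LinearAlgebra

variable {ι : Type*} [Fintype ι]

theorem dotProduct_self_nonneg (v : ι → ℝ) : 0 ≤ v ⬝ᵥ v :=
  sum_nonneg fun i _ => mul_self_nonneg (v i)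

theorem dotProduct_sub_self_le (a b : ι → ℝ) : (a - b) ⬝ᵥ (a - b) ≤ 2 * (a ⬝ᵥ a + b ⬝ᵥ b) := by
  have := dotProduct_self_nonneg (a + b)
  simp only [dotProduct_add, add_dotProduct, dotProduct_sub, sub_dotProduct,
    dotProduct_comm b a] at *
  linarith

theorem sq_norm_le_dotProduct_self (v : ι → ℝ) : ‖v‖ ^ 2 ≤ v ⬝ᵥ v := by
  have hcoord : ∀ i, ‖v i‖ ≤ √(v ⬝ᵥ v) := fun i => Real.abs_le_sqrt <| by
    simpa [sq, dotProduct] using single_le_sum (f := fun j => v j * v j)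
      (fun j _ => mul_self_nonneg (v j)) (mem_univ i)
  have hnorm : ‖v‖ ≤ √(v ⬝ᵥ v) := (pi_norm_le_iff_of_nonneg (Real.sqrt_nonneg _)).mpr hcoord
  calc ‖v‖ ^ 2 ≤ √(v ⬝ᵥ v) ^ 2 := pow_le_pow_left₀ (norm_nonneg v) hnorm 2
    _ = v ⬝ᵥ v := Real.sq_sqrt (dotProduct_self_nonneg v)

theorem Matrix.IsSymm.dotProduct_mulVec_comm {R : Type*} [CommSemiring R] {A : Matrix ι ι R}
    (hA : A.IsSymm) (x y : ι → R) : x ⬝ᵥ (A *ᵥ y) = (A *ᵥ x) ⬝ᵥ y := by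
  rw [dotProduct_mulVec, ← mulVec_transpose, hA]

theorem exists_isSymm_abs_dotProduct_mulVec_le [Nonempty ι] {M : Matrix ι ι ℝ} (hM : M.IsSymm)
    (hM1 : M *ᵥ 1 = 1) {ε : ℝ} (hε : 0 ≤ ε)
    (h : ∀ v : ι → ℝ, ∑ i, v i = 0 → |v ⬝ᵥ (M *ᵥ v)| ≤ ε * (v ⬝ᵥ v)) :
    ∃ N : Matrix ι ι ℝ, N.IsSymm ∧ (∀ w, |w ⬝ᵥ (N *ᵥ w)| ≤ ε * (w ⬝ᵥ w)) ∧
      ∀ v : ι → ℝ, ∑ i, v i = 0 → N *ᵥ v = M *ᵥ v := by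
  set n : ℝ := (Fintype.card ι : ℝ)
  have hn : n ≠ 0 := Nat.cast_ne_zero.mpr Fintype.card_ne_zero
  set J : Matrix ι ι ℝ := of fun _ _ => 1
  have hJ : ∀ w, J *ᵥ w = (∑ i, w i) • 1 := fun w => by
    ext; simp [J, mulVec, dotProduct]
  -- `M` fixes `1`, so `M - J / n` is `M` composed with the orthogonal projection onto `1ᗮ`.
  refine ⟨M - n⁻¹ • J, hM.sub ((IsSymm.ext fun _ _ => rfl).smul _), fun w => ?_,
    fun v hv => by simp [sub_mulVec, smul_mulVec, hJ, hv]⟩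
  set s := (∑ i, w i) / n
  set P := w - s • 1
  have hsum : ∑ i, w i = n * s := by simp [s, mul_div_cancel₀ _ hn]
  have hP : ∑ i, P i = 0 := by
    simp [P, sum_sub_distrib, Finset.card_univ, hsum, n]
  have hNw : (M - n⁻¹ • J) *ᵥ w = M *ᵥ P := by
    simp [P, sub_mulVec, smul_mulVec, hJ, mulVec_sub, mulVec_smul, hM1, s, div_eq_inv_mul,
      smul_smul]
  have hwP : w ⬝ᵥ (M *ᵥ P) = P ⬝ᵥ (M *ᵥ P) := by
    rw [show w = P + s • 1 by simp [P], add_dotProduct, smul_dotProduct,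
      hM.dotProduct_mulVec_comm 1 P, hM1, one_dotProduct, hP, smul_zero, add_zero]
  have hPP : P ⬝ᵥ P ≤ w ⬝ᵥ w := by
    have hn0 : 0 ≤ n := Nat.cast_nonneg _
    have hP' : ∑ i, (w - s • 1) i = 0 := hP
    simp only [P, dotProduct_sub, dotProduct_smul, dotProduct_one, hP', sub_dotProduct,
      smul_dotProduct, one_dotProduct, hsum, smul_eq_mul]
    nlinarith [mul_nonneg hn0 (sq_nonneg s)]
  rw [hNw, hwP]
  exact (h P hP).trans (mul_le_mul_of_nonneg_left hPP hε)

theorem sum_mulVec_of_isSymm {M : Matrix ι ι ℝ} (hM : M.IsSymm) (hM1 : M *ᵥ 1 = 1) (v : ι → ℝ) :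
    ∑ i, (M *ᵥ v) i = ∑ i, v i := by
  rw [← one_dotProduct, ← one_dotProduct, hM.dotProduct_mulVec_comm, hM1]

variable [DecidableEq ι]

theorem sum_geom_sum_mulVec_eq_zero {M : Matrix ι ι ℝ} (hM : M.IsSymm) (hM1 : M *ᵥ 1 = 1)
    (q : ℕ) {v : ι → ℝ} (hv : ∑ i, v i = 0) :
    ∑ i, ((∑ p ∈ range (q + 1), M ^ p) *ᵥ v) i = 0 := by
  have hpow : ∀ p (w : ι → ℝ), ∑ i, (M ^ p *ᵥ w) i = ∑ i, w i := by
    intro p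
    induction p with
    | zero => simp
    | succ p ih => intro w; rw [pow_succ, ← mulVec_mulVec, ih, sum_mulVec_of_isSymm hM hM1]
  rw [sum_mulVec]
  simp only [Finset.sum_apply]
  rw [sum_comm]
  simp [hpow, hv]

end LinearAlgebra

theorem div_le_geom_sum_of_abs_le {ε μ : ℝ} (q : ℕ) (hε : ε < 1) (hμ : |μ| ≤ ε) :
    (1 - ε ^ (q + 1)) / (1 + ε) ≤ ∑ p ∈ range (q + 1), μ ^ p := by
  obtain ⟨hμl, hμu⟩ := abs_le.mp hμ
  have hpow : μ ^ (q + 1) ≤ ε ^ (q + 1) := (le_abs_self _).trans (by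
    rw [abs_pow]; exact pow_le_pow_left₀ (abs_nonneg μ) hμ _)
  have hεq : ε ^ (q + 1) < 1 := pow_lt_one₀ ((abs_nonneg μ).trans hμ) hε (Nat.succ_ne_zero q)
  have hgeom := geom_sum_mul_neg μ (q + 1)
  have hpos : 0 < ∑ p ∈ range (q + 1), μ ^ p := by nlinarith
  rw [div_le_iff₀ (by linarith)]
  nlinarith

theorem geom_sum_le_geom_sum_of_abs_le {ε μ : ℝ} (q : ℕ) (hμ : |μ| ≤ ε) :
    ∑ p ∈ range (q + 1), μ ^ p ≤ ∑ p ∈ range (q + 1), ε ^ p :=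
  sum_le_sum fun p _ => (le_abs_self _).trans (by
    rw [abs_pow]; exact pow_le_pow_left₀ (abs_nonneg μ) hμ _)

theorem div_mul_one_sub_le_geom_sum_sub_mul_sq {ε μ t : ℝ} (q : ℕ) (hε : ε < 1) (hμ : |μ| ≤ ε)
    (ht : 0 ≤ t) (htε : t * ∑ p ∈ range (q + 1), ε ^ p ≤ 1) :
    (1 - ε ^ (q + 1)) / (1 + ε) * (1 - t * ∑ p ∈ range (q + 1), ε ^ p) ≤
      ∑ p ∈ range (q + 1), μ ^ p - t * (∑ p ∈ range (q + 1), μ ^ p) ^ 2 := by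
  have hlo := div_le_geom_sum_of_abs_le q hε hμ
  have hhi := geom_sum_le_geom_sum_of_abs_le q hμ
  have hεq : ε ^ (q + 1) < 1 := pow_lt_one₀ ((abs_nonneg μ).trans hμ) hε (Nat.succ_ne_zero q)
  have ha : 0 < (1 - ε ^ (q + 1)) / (1 + ε) :=
    div_pos (by linarith) (by linarith [(abs_nonneg μ).trans hμ])
  -- for `a ≤ φ ≤ b` as above, the difference is `(φ - a) (1 - t b) + t φ (b - φ)`
  nlinarith [mul_nonneg (sub_nonneg.mpr hlo) (sub_nonneg.mpr htε),
    mul_nonneg (mul_nonneg (ha.le.trans hlo) ht) (sub_nonneg.mpr hhi)]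

theorem mul_geom_sum_lt_one {n : ℕ} (hn : 2 ≤ n) {ε α : ℝ} (hε0 : 0 ≤ ε) (hε1 : ε < 1) (q : ℕ)
    (hα : α < 2 * (1 - ε) / ((n - 1 : ℝ) * (1 + ε) * (1 - ε ^ (q + 1)))) :
    α * (1 + ε) / 2 * ∑ p ∈ range (q + 1), ε ^ p < 1 := by
  have hn' : (1 : ℝ) ≤ n - 1 := by
    have : (2 : ℝ) ≤ n := by exact_mod_cast hn
    linarith
  set S := ∑ p ∈ range (q + 1), ε ^ p
  have hS : 1 ≤ S := by
    simpa [S, sum_range_succ'] using sum_nonneg fun p (_ : p ∈ range q) => pow_nonneg hε0 (p + 1)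
  rw [← geom_sum_mul_neg, lt_div_iff₀ (by positivity)] at hα
  have hαS : α * (n - 1) * (1 + ε) * S < 2 := by nlinarith
  nlinarith

section Spectral

variable {ι : Type*} [Fintype ι] [DecidableEq ι]

theorem Matrix.IsHermitian.abs_eigenvalues_le {N : Matrix ι ι ℝ} (hN : N.IsHermitian) {ε : ℝ}
    (h : ∀ v : ι → ℝ, |v ⬝ᵥ (N *ᵥ v)| ≤ ε * (v ⬝ᵥ v)) (j : ι) :
    |hN.eigenvalues j| ≤ ε := by
  have hb : ⇑(hN.eigenvectorBasis j) ⬝ᵥ ⇑(hN.eigenvectorBasis j) = 1 := by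
    have h := real_inner_self_eq_norm_sq (hN.eigenvectorBasis j)
    rw [hN.eigenvectorBasis.orthonormal.1 j, one_pow, EuclideanSpace.inner_eq_star_dotProduct] at h
    simpa using h
  simpa [hN.eigenvalues_eq j, hb] using h (hN.eigenvectorBasis j)

theorem Matrix.IsHermitian.aeval_eq {N : Matrix ι ι ℝ} (hN : N.IsHermitian) (P : ℝ[X]) :
    aeval N P = hN.eigenvectorUnitary * diagonal (fun j => P.eval (hN.eigenvalues j)) *
      star (hN.eigenvectorUnitary : Matrix ι ι ℝ) := by
  conv_lhs => rw [hN.spectral_theorem]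
  rw [aeval_algHom_apply, Unitary.conjStarAlgAut_apply, ← diagonalAlgHom_apply (R := ℝ),
    aeval_algHom_apply (diagonalAlgHom ℝ), aeval_pi_apply]
  simp

theorem Matrix.IsHermitian.le_dotProduct_aeval_mulVec {N : Matrix ι ι ℝ} (hN : N.IsHermitian)
    (P : ℝ[X]) {c : ℝ} (h : ∀ j, c ≤ P.eval (hN.eigenvalues j)) (v : ι → ℝ) :
    c * (v ⬝ᵥ v) ≤ v ⬝ᵥ (aeval N P *ᵥ v) := by
  have hpsd : (aeval N (P - C c)).PosSemidef := by
    rw [hN.aeval_eq]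
    refine PosSemidef.mul_mul_conjTranspose_same (posSemidef_diagonal_iff.mpr fun j => ?_) _
    simpa using h j
  have := hpsd.dotProduct_mulVec_nonneg v
  simp [sub_mulVec, Algebra.algebraMap_eq_smul_one, dotProduct_sub, smul_mulVec] at this
  linarith

theorem le_dotProduct_geom_sum_mulVec [Nonempty ι] {M : Matrix ι ι ℝ} (hM : M.IsSymm)
    (hM1 : M *ᵥ 1 = 1) {ε : ℝ} (hε0 : 0 ≤ ε) (hε1 : ε < 1)
    (h : ∀ v : ι → ℝ, ∑ i, v i = 0 → |v ⬝ᵥ (M *ᵥ v)| ≤ ε * (v ⬝ᵥ v)) (q : ℕ) {t : ℝ} (ht : 0 ≤ t)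
    (htε : t * ∑ p ∈ range (q + 1), ε ^ p ≤ 1) {v : ι → ℝ} (hv : ∑ i, v i = 0) :
    (1 - ε ^ (q + 1)) / (1 + ε) * (1 - t * ∑ p ∈ range (q + 1), ε ^ p) * (v ⬝ᵥ v) ≤
      v ⬝ᵥ ((∑ p ∈ range (q + 1), M ^ p) *ᵥ v) -
        t * (((∑ p ∈ range (q + 1), M ^ p) *ᵥ v) ⬝ᵥ ((∑ p ∈ range (q + 1), M ^ p) *ᵥ v)) := by
  obtain ⟨N, hN, hNε, hNM⟩ := exists_isSymm_abs_dotProduct_mulVec_le hM hM1 hε0 h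
  have hpow : ∀ p (w : ι → ℝ), ∑ i, w i = 0 → N ^ p *ᵥ w = M ^ p *ᵥ w := by
    intro p
    induction p with
    | zero => simp
    | succ p ih =>
      intro w hw
      rw [pow_succ, pow_succ, ← mulVec_mulVec, ← mulVec_mulVec, hNM w hw,
        ih _ ((sum_mulVec_of_isSymm hM hM1 w).trans hw)]
  set Φ : ℝ[X] := ∑ p ∈ range (q + 1), X ^ p
  have hΦ : aeval N Φ = ∑ p ∈ range (q + 1), N ^ p := by simp [Φ]
  have hAv : (∑ p ∈ range (q + 1), M ^ p) *ᵥ v = aeval N Φ *ᵥ v := by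
    rw [hΦ, sum_mulVec, sum_mulVec]
    exact sum_congr rfl fun p _ => (hpow p v hv).symm
  have hΦsymm : (aeval N Φ).IsSymm := by
    simp only [hΦ, IsSymm, transpose_sum, transpose_pow, hN.eq]
  have hNh : N.IsHermitian := isHermitian_iff_isSymm.mpr hN
  have key := hNh.le_dotProduct_aeval_mulVec (Φ - C t * Φ ^ 2) (fun j => by
    simpa [Φ, eval_finsetSum] using div_mul_one_sub_le_geom_sum_sub_mul_sq q hε1
      (hNh.abs_eigenvalues_le hNε j) ht htε) v
  have hsq : (aeval N Φ *ᵥ v) ⬝ᵥ (aeval N Φ *ᵥ v) = v ⬝ᵥ (aeval N Φ ^ 2 *ᵥ v) := by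
    rw [sq, ← mulVec_mulVec, hΦsymm.dotProduct_mulVec_comm, dotProduct_comm]
  simp only [map_sub, map_mul, map_pow, aeval_C, Algebra.algebraMap_eq_smul_one, smul_mul_assoc,
    one_mul, sub_mulVec, smul_mulVec, dotProduct_sub, dotProduct_smul, smul_eq_mul] at key
  rwa [hAv, hsq]

end Spectral

theorem exists_taylor_two {F : ℝ → ℝ} (hF : ContDiff ℝ 2 F) (a b : ℝ) :
    ∃ ξ, F (a + b) = F a + deriv F a * b + deriv (deriv F) ξ * b ^ 2 / 2 := by
  rcases eq_or_ne b 0 with rfl | hb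
  · exact ⟨0, by simp⟩
  have hne : a ≠ a + b := by simpa using hb
  obtain ⟨ξ, -, hξ⟩ := taylor_mean_remainder_lagrange_iteratedDeriv (n := 1) hne hF.contDiffOn
  have hderiv : derivWithin F (Set.uIcc a (a + b)) a = deriv F a :=
    ((hF.differentiable two_ne_zero) a).derivWithin (uniqueDiffOn_uIcc hne a Set.left_mem_uIcc)
  refine ⟨ξ, ?_⟩
  rw [taylor_within_apply] at hξ
  simp [Finset.sum_range_succ, hderiv, iteratedDeriv_succ] at hξ
  linarith

theorem tendsto_zero_of_le_sub_succ {a s : ℕ → ℝ} (ha : ∀ k, 0 ≤ a k)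
    (h : ∀ k, a k ≤ s k - s (k + 1)) (hs : BddBelow (Set.range s)) :
    Tendsto a atTop (𝓝 0) := by
  have hanti : Antitone s := antitone_nat_of_succ_le fun k => by linarith [ha k, h k]
  have hlim := tendsto_atTop_ciInf hanti hs
  have hdiff : Tendsto (fun k => s k - s (k + 1)) atTop (𝓝 0) := by
    simpa using hlim.sub (hlim.comp (tendsto_add_atTop_nat 1))
  exact squeeze_zero ha h hdiff

theorem cauchySeq_of_dist_sq_le {E : Type*} [PseudoMetricSpace E] {x : ℕ → E} {b : ℕ → ℝ}
    (hb : Tendsto b atTop (𝓝 0)) (h : ∀ k l, dist (x k) (x l) ^ 2 ≤ b k + b l) : CauchySeq x := by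
  refine Metric.cauchySeq_iff.mpr fun r hr => ?_
  obtain ⟨N, hN⟩ := eventually_atTop.mp (hb.eventually_lt_const (half_pos (pow_pos hr 2)))
  refine ⟨N, fun k hk l hl => ?_⟩
  have := h k l
  nlinarith [hN k hk, hN l hl, dist_nonneg (x := x k) (y := x l)]

section Descent

variable {ι : Type*} [Fintype ι]

/-- `m`-strong convexity and `K`-smoothness along `1ᗮ`; `G` need not be a derivative. -/
structure SumZeroQuadBounds (g : (ι → ℝ) → ℝ) (G : (ι → ℝ) → ι → ℝ) (m K : ℝ) : Prop where
  lower : ∀ u d, ∑ i, d i = 0 → g u + d ⬝ᵥ G u + m / 2 * (d ⬝ᵥ d) ≤ g (u + d)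
  upper : ∀ u d, ∑ i, d i = 0 → g (u + d) ≤ g u + d ⬝ᵥ G u + K / 2 * (d ⬝ᵥ d)

namespace SumZeroQuadBounds

variable {g : (ι → ℝ) → ℝ} {G : (ι → ℝ) → ι → ℝ} {m K : ℝ}

theorem lower_of_sum_eq (hb : SumZeroQuadBounds g G m K) {u w : ι → ℝ}
    (h : ∑ i, u i = ∑ i, w i) :
    g u + (w - u) ⬝ᵥ G u + m / 2 * ((w - u) ⬝ᵥ (w - u)) ≤ g w := by
  simpa using hb.lower u (w - u) (by simp [sum_sub_distrib, h])

theorem sub_div_le (hb : SumZeroQuadBounds g G m K) (hm : 0 < m) {u w : ι → ℝ}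
    (h : ∑ i, u i = ∑ i, w i) : g u - G u ⬝ᵥ G u / (2 * m) ≤ g w := by
  have hlow := hb.lower_of_sum_eq h
  set d := w - u
  have hsq := dotProduct_self_nonneg (m • d + G u)
  simp only [dotProduct_add, add_dotProduct, dotProduct_smul, smul_dotProduct,
    smul_eq_mul, dotProduct_comm (G u) d] at hsq
  have key : -(d ⬝ᵥ G u + m / 2 * (d ⬝ᵥ d)) ≤ G u ⬝ᵥ G u / (2 * m) := by
    rw [le_div_iff₀ (by positivity)]
    nlinarith
  linarith

theorem mul_dotProduct_le (hb : SumZeroQuadBounds g G m K) {u w : ι → ℝ}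
    (h : ∑ i, u i = ∑ i, w i) :
    m * ((u - w) ⬝ᵥ (u - w)) ≤ (G u - G w) ⬝ᵥ (u - w) := by
  have h1 := hb.lower_of_sum_eq h
  have h2 := hb.lower_of_sum_eq h.symm
  simp only [← neg_sub u w, neg_dotProduct, dotProduct_neg, neg_neg] at h1
  rw [sub_dotProduct (G u), dotProduct_comm (G u), dotProduct_comm (G w)]
  linarith

theorem sq_mul_dotProduct_le (hb : SumZeroQuadBounds g G m K) (hm : 0 ≤ m) {u w : ι → ℝ}
    (h : ∑ i, u i = ∑ i, w i) :
    m ^ 2 * ((u - w) ⬝ᵥ (u - w)) ≤ (G u - G w) ⬝ᵥ (G u - G w) := by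
  have hmono := hb.mul_dotProduct_le h
  set d := u - w
  set e := G u - G w
  have hsq := dotProduct_self_nonneg (m • d - e)
  simp only [dotProduct_sub, sub_dotProduct, dotProduct_smul, smul_dotProduct,
    smul_eq_mul, dotProduct_comm d e] at hsq
  nlinarith

theorem sufficient_decrease (hb : SumZeroQuadBounds g G m K) {u v : ι → ℝ}
    (hv : ∑ i, v i = 0) {α c : ℝ}
    (h : c * (G u ⬝ᵥ G u) ≤ α * (G u ⬝ᵥ v) - α ^ 2 * K / 2 * (v ⬝ᵥ v)) :
    g (u - α • v) + c * (G u ⬝ᵥ G u) ≤ g u := by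
  have hup := hb.upper u (-(α • v)) (by simp [← mul_sum, hv])
  simp only [← sub_eq_add_neg, neg_dotProduct, dotProduct_neg, smul_dotProduct,
    dotProduct_smul, smul_eq_mul, dotProduct_comm v] at hup
  nlinarith

theorem le_of_grad_eq_zero (hb : SumZeroQuadBounds g G m K) (hm : 0 ≤ m) {u w : ι → ℝ}
    (hu : G u = 0) (h : ∑ i, u i = ∑ i, w i) : g u ≤ g w := by
  have := hb.lower_of_sum_eq h
  rw [hu, dotProduct_zero, add_zero] at this
  nlinarith [mul_nonneg hm (dotProduct_self_nonneg (w - u))]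

theorem grad_eq_zero_of_forall_le (hb : SumZeroQuadBounds g G m K) (hK : 0 < K) {u : ι → ℝ}
    (hGu : ∑ i, G u i = 0) (hmin : ∀ w, ∑ i, u i = ∑ i, w i → g u ≤ g w) : G u = 0 := by
  have hup := hb.upper u (-K⁻¹ • G u) (by simp [← mul_sum, hGu])
  have hle := hmin (u + -K⁻¹ • G u) (by simp [sum_add_distrib, ← mul_sum, hGu])
  simp only [smul_dotProduct, dotProduct_smul, smul_eq_mul] at hup
  have hK' : K / 2 * (-K⁻¹ * (-K⁻¹ * (G u ⬝ᵥ G u))) = K⁻¹ / 2 * (G u ⬝ᵥ G u) := by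
    field_simp
  have hGG : K⁻¹ * (G u ⬝ᵥ G u) ≤ 0 := by linarith
  exact dotProduct_self_eq_zero.mp
    (le_antisymm (nonpos_of_mul_nonpos_right hGG (inv_pos.mpr hK)) (dotProduct_self_nonneg _))

theorem eq_of_grad_eq_zero (hb : SumZeroQuadBounds g G m K) (hm : 0 < m) {u w : ι → ℝ}
    (hu : G u = 0) (hw : G w = 0) (h : ∑ i, u i = ∑ i, w i) : u = w := by
  have := hb.sq_mul_dotProduct_le hm.le h
  rw [hu, hw, sub_zero, dotProduct_zero] at this
  have hd : (u - w) ⬝ᵥ (u - w) = 0 :=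
    le_antisymm (nonpos_of_mul_nonpos_right this (by positivity)) (dotProduct_self_nonneg _)
  exact sub_eq_zero.mp (dotProduct_self_eq_zero.mp hd)

theorem exists_grad_eq_zero_tendsto (hb : SumZeroQuadBounds g G m K) (hm : 0 < m)
    (hG : Continuous G) {c : ℝ} (hc : 0 < c) {z : ℕ → ι → ℝ}
    (hsum : ∀ k, ∑ i, z k i = ∑ i, z 0 i)
    (hdesc : ∀ k, g (z (k + 1)) + c * (G (z k) ⬝ᵥ G (z k)) ≤ g (z k)) :
    ∃ zs, G zs = 0 ∧ ∑ i, zs i = ∑ i, z 0 i ∧ Tendsto z atTop (𝓝 zs) := by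
  have hGG : Tendsto (fun k => G (z k) ⬝ᵥ G (z k)) atTop (𝓝 0) := by
    have := tendsto_zero_of_le_sub_succ (a := fun k => c * (G (z k) ⬝ᵥ G (z k))) (s := g ∘ z)
      (fun k => mul_nonneg hc.le (dotProduct_self_nonneg _))
      (fun k => by simp only [Function.comp]; linarith [hdesc k])
      ⟨g (z 0) - G (z 0) ⬝ᵥ G (z 0) / (2 * m), by
        rintro _ ⟨k, rfl⟩; exact hb.sub_div_le hm (hsum k).symm⟩
    simpa [hc.ne'] using this.const_mul c⁻¹
  have hcauchy : CauchySeq z := by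
    refine cauchySeq_of_dist_sq_le (b := fun k => 2 / m ^ 2 * (G (z k) ⬝ᵥ G (z k)))
      (by simpa using hGG.const_mul (2 / m ^ 2)) fun k l => ?_
    have h1 := hb.sq_mul_dotProduct_le hm.le ((hsum k).trans (hsum l).symm)
    have h2 := dotProduct_sub_self_le (G (z k)) (G (z l))
    have h3 := mul_le_mul_of_nonneg_left (sq_norm_le_dotProduct_self (z k - z l)) (sq_nonneg m)
    rw [dist_eq_norm, ← mul_add, div_mul_eq_mul_div, le_div_iff₀ (by positivity)]
    linarith
  obtain ⟨zs, hzs⟩ := cauchySeq_tendsto_of_complete hcauchy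
  have hGzs : G zs ⬝ᵥ G zs = 0 :=
    tendsto_nhds_unique (((hG.dotProduct hG).tendsto zs).comp hzs) hGG
  have hsumzs : ∑ i, zs i = ∑ i, z 0 i :=
    tendsto_nhds_unique
      (((continuous_finsetSum _ fun i _ => continuous_apply i).tendsto zs).comp hzs)
      (tendsto_const_nhds.congr fun k => (hsum k).symm)
  exact ⟨zs, dotProduct_self_eq_zero.mp hGzs, hsumzs, hzs⟩

end SumZeroQuadBounds

end Descent

noncomputable section DANA

variable {ι : Type*} [Fintype ι]

section Definitions

variable (L : Matrix ι ι ℝ) (f : ι → ℝ → ℝ) (x0 : ι → ℝ)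

def objective (z : ι → ℝ) : ℝ := ∑ i, f i (x0 i + (L *ᵥ z) i)

def objectiveGrad (z : ι → ℝ) : ι → ℝ := L *ᵥ fun i => deriv (f i) (x0 i + (L *ᵥ z) i)

variable [DecidableEq ι]

def diagHessian (x : ι → ℝ) : Matrix ι ι ℝ := diagonal fun i => deriv (deriv (f i)) (x i)

def danaPrecond (q : ℕ) (z : ι → ℝ) : Matrix ι ι ℝ :=
  ∑ p ∈ range (q + 1), (1 - L * diagHessian f (fun i => x0 i + (L *ᵥ z) i) * L) ^ p

end Definitions

variable {L : Matrix ι ι ℝ} {f : ι → ℝ → ℝ} (x0 : ι → ℝ)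

theorem sum_objectiveGrad (hL : L.IsSymm) (hL1 : L *ᵥ 1 = 0) (z : ι → ℝ) :
    ∑ i, objectiveGrad L f x0 z i = 0 := by
  rw [← one_dotProduct, objectiveGrad, hL.dotProduct_mulVec_comm, hL1, zero_dotProduct]

theorem objective_add_smul_one (hL1 : L *ᵥ 1 = 0) (z : ι → ℝ) (c : ℝ) :
    objective L f x0 (z + c • 1) = objective L f x0 z := by
  simp [objective, mulVec_add, mulVec_smul, hL1]

theorem continuous_objectiveGrad (hf : ∀ i, Continuous (deriv (f i))) :
    Continuous (objectiveGrad L f x0) := by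
  unfold objectiveGrad
  fun_prop

theorem objective_le_of_objectiveGrad_eq_zero [Nonempty ι] (hL1 : L *ᵥ 1 = 0) {m K : ℝ}
    (hb : SumZeroQuadBounds (objective L f x0) (objectiveGrad L f x0) m K) (hm : 0 ≤ m)
    {u : ι → ℝ} (hu : objectiveGrad L f x0 u = 0) (w : ι → ℝ) :
    objective L f x0 u ≤ objective L f x0 w := by
  have hn : (Fintype.card ι : ℝ) ≠ 0 := Nat.cast_ne_zero.mpr Fintype.card_ne_zero
  set c := (∑ i, u i - ∑ i, w i) / Fintype.card ι
  rw [← objective_add_smul_one x0 hL1 w c]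
  refine hb.le_of_grad_eq_zero hm hu ?_
  simp [sum_add_distrib, c, Finset.card_univ, mul_div_cancel₀ _ hn]

variable [DecidableEq ι]

theorem exists_objective_add_eq (hL : L.IsSymm) (hf : ∀ i, ContDiff ℝ 2 (f i)) (u d : ι → ℝ) :
    ∃ ξ : ι → ℝ, objective L f x0 (u + d) = objective L f x0 u + d ⬝ᵥ objectiveGrad L f x0 u +
      (L *ᵥ d) ⬝ᵥ (diagHessian f ξ *ᵥ (L *ᵥ d)) / 2 := by
  choose ξ hξ using fun i => exists_taylor_two (hf i) (x0 i + (L *ᵥ u) i) ((L *ᵥ d) i)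
  refine ⟨ξ, ?_⟩
  rw [objectiveGrad, hL.dotProduct_mulVec_comm, objective, objective]
  simp only [diagHessian, mulVec_add, Pi.add_apply, ← add_assoc, hξ, mulVec_diagonal, dotProduct,
    sum_div, ← sum_add_distrib]
  exact sum_congr rfl fun i _ => by ring

theorem sumZeroQuadBounds_objective (hL : L.IsSymm) (hf : ∀ i, ContDiff ℝ 2 (f i)) {ε : ℝ}
    (hspec : ∀ x v : ι → ℝ, ∑ i, v i = 0 →
      |v ⬝ᵥ ((1 - L * diagHessian f x * L) *ᵥ v)| ≤ ε * (v ⬝ᵥ v)) :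
    SumZeroQuadBounds (objective L f x0) (objectiveGrad L f x0) (1 - ε) (1 + ε) := by
  have hquad : ∀ x v : ι → ℝ, v ⬝ᵥ ((1 - L * diagHessian f x * L) *ᵥ v) =
      v ⬝ᵥ v - (L *ᵥ v) ⬝ᵥ (diagHessian f x *ᵥ (L *ᵥ v)) := fun x v => by
    rw [sub_mulVec, one_mulVec, dotProduct_sub, ← mulVec_mulVec, ← mulVec_mulVec,
      hL.dotProduct_mulVec_comm]
  constructor <;> intro u d hd
  all_goals
    obtain ⟨ξ, hξ⟩ := exists_objective_add_eq x0 hL hf u d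
    obtain ⟨hlo, hhi⟩ := abs_le.mp (hquad ξ d ▸ hspec ξ d hd)
    rw [hξ]
    linarith

theorem isSymm_one_sub_mul_diagHessian_mul (hL : L.IsSymm) (x : ι → ℝ) :
    (1 - L * diagHessian f x * L).IsSymm :=
  isSymm_one.sub (by simp [IsSymm, transpose_mul, hL.eq, diagHessian, Matrix.mul_assoc])

theorem one_sub_mul_diagHessian_mul_mulVec_one (hL1 : L *ᵥ 1 = 0) (x : ι → ℝ) :
    (1 - L * diagHessian f x * L) *ᵥ 1 = 1 := by
  rw [sub_mulVec, one_mulVec, ← mulVec_mulVec, hL1, mulVec_zero, sub_zero]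

theorem sum_danaPrecond_mulVec_objectiveGrad (hL : L.IsSymm) (hL1 : L *ᵥ 1 = 0) (q : ℕ)
    (z : ι → ℝ) : ∑ i, (danaPrecond L f x0 q z *ᵥ objectiveGrad L f x0 z) i = 0 :=
  sum_geom_sum_mulVec_eq_zero (isSymm_one_sub_mul_diagHessian_mul hL _)
    (one_sub_mul_diagHessian_mul_mulVec_one hL1 _) q (sum_objectiveGrad x0 hL hL1 z)

theorem sum_eq_of_danaIter (hL : L.IsSymm) (hL1 : L *ᵥ 1 = 0) {q : ℕ} {α : ℝ}
    {z : ℕ → ι → ℝ}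
    (hiter : ∀ k, z (k + 1) = z k - α • (danaPrecond L f x0 q (z k) *ᵥ objectiveGrad L f x0 (z k)))
    (k : ℕ) : ∑ i, z k i = ∑ i, z 0 i := by
  induction k with
  | zero => rfl
  | succ k ih =>
    simp [hiter, sum_sub_distrib, ← mul_sum, sum_danaPrecond_mulVec_objectiveGrad x0 hL hL1, ih]

theorem exists_pos_objective_danaStep_add_le [Nonempty ι] (hL : L.IsSymm) (hL1 : L *ᵥ 1 = 0)
    (hf : ∀ i, ContDiff ℝ 2 (f i)) {ε : ℝ} (hε0 : 0 ≤ ε) (hε1 : ε < 1)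
    (hspec : ∀ x v : ι → ℝ, ∑ i, v i = 0 →
      |v ⬝ᵥ ((1 - L * diagHessian f x * L) *ᵥ v)| ≤ ε * (v ⬝ᵥ v))
    (q : ℕ) {α : ℝ} (hα0 : 0 < α) (hα : α * (1 + ε) / 2 * ∑ p ∈ range (q + 1), ε ^ p < 1) :
    ∃ c > 0, ∀ z, objective L f x0 (z - α • (danaPrecond L f x0 q z *ᵥ objectiveGrad L f x0 z)) +
      c * (objectiveGrad L f x0 z ⬝ᵥ objectiveGrad L f x0 z) ≤ objective L f x0 z := by
  set b := ∑ p ∈ range (q + 1), ε ^ p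
  have hεq : ε ^ (q + 1) < 1 := pow_lt_one₀ hε0 hε1 (Nat.succ_ne_zero q)
  have ha : 0 < (1 - ε ^ (q + 1)) / (1 + ε) := div_pos (by linarith) (by linarith)
  refine ⟨α * ((1 - ε ^ (q + 1)) / (1 + ε) * (1 - α * (1 + ε) / 2 * b)),
    mul_pos hα0 (mul_pos ha (by linarith)), fun z => ?_⟩
  refine (sumZeroQuadBounds_objective x0 hL hf hspec).sufficient_decrease
    (sum_danaPrecond_mulVec_objectiveGrad x0 hL hL1 q z) ?_
  set x := fun i => x0 i + (L *ᵥ z) i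
  have key := le_dotProduct_geom_sum_mulVec (isSymm_one_sub_mul_diagHessian_mul hL x)
    (one_sub_mul_diagHessian_mul_mulVec_one hL1 x) hε0 hε1 (hspec x) q (by positivity) hα.le
    (sum_objectiveGrad (f := f) x0 hL hL1 z)
  unfold danaPrecond
  linarith [mul_le_mul_of_nonneg_left key hα0.le]

end DANA

theorem dana_d_convergence_general
    (n : ℕ) (hn : 2 ≤ n)
    (L : Matrix (Fin n) (Fin n) ℝ)
    (hLsymm : L.IsSymm)
    (hL1 : L *ᵥ (fun _ => (1 : ℝ)) = 0)
    (f : Fin n → ℝ → ℝ)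
    (hf : ∀ i, ContDiff ℝ 2 (f i))
    (x0 : Fin n → ℝ)
    (g : (Fin n → ℝ) → ℝ)
    (hg : g = fun z => ∑ i, f i (x0 i + (L *ᵥ z) i))
    (H : (Fin n → ℝ) → Matrix (Fin n) (Fin n) ℝ)
    (hH : H = fun x => Matrix.diagonal fun i => deriv (deriv (f i)) (x i))
    (gradg : (Fin n → ℝ) → (Fin n → ℝ))
    (hgradg : gradg = fun z => L *ᵥ fun i => deriv (f i) (x0 i + (L *ᵥ z) i))
    (q : ℕ)
    (A : (Fin n → ℝ) → Matrix (Fin n) (Fin n) ℝ)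
    (hA : A = fun z => ∑ p ∈ Finset.range (q + 1),
      (1 - L * H (fun i => x0 i + (L *ᵥ z) i) * L) ^ p)
    (ε : ℝ) (hε0 : 0 ≤ ε) (hε1 : ε < 1)
    (hspec : ∀ x v : Fin n → ℝ, (∑ i, v i) = 0 →
      |v ⬝ᵥ ((1 - L * H x * L) *ᵥ v)| ≤ ε * (v ⬝ᵥ v))
    (α : ℝ) (hα0 : 0 < α)
    (hα : α < 2 * (1 - ε) / ((n - 1 : ℝ) * (1 + ε) * (1 - ε ^ (q + 1))))
    (z0 : Fin n → ℝ) (z : ℕ → Fin n → ℝ)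
    (hz0 : z 0 = z0)
    (hiter : ∀ k, z (k + 1) = z k - α • (A (z k) *ᵥ gradg (z k))) :
    ∃ zstar : Fin n → ℝ,
      (∀ w, g zstar ≤ g w) ∧ (∑ i, zstar i = ∑ i, z0 i) ∧
      (∀ w, (∀ w', g w ≤ g w') → (∑ i, w i = ∑ i, z0 i) → w = zstar) ∧
      Tendsto z atTop (nhds zstar) := by
  obtain rfl : g = objective L f x0 := hg
  obtain rfl : gradg = objectiveGrad L f x0 := hgradg
  obtain rfl : H = diagHessian f := hH
  obtain rfl : A = danaPrecond L f x0 q := hA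
  subst hz0
  have : Nonempty (Fin n) := ⟨⟨0, by omega⟩⟩
  have hb := sumZeroQuadBounds_objective x0 hLsymm hf hspec
  obtain ⟨c, hc, hdesc⟩ := exists_pos_objective_danaStep_add_le x0 hLsymm hL1 hf hε0 hε1 hspec q
    hα0 (mul_geom_sum_lt_one hn hε0 hε1 q hα)
  obtain ⟨zs, hGzs, hzs, hlim⟩ := hb.exists_grad_eq_zero_tendsto (by linarith)
    (continuous_objectiveGrad x0 fun i => (hf i).continuous_deriv one_le_two) hc
    (sum_eq_of_danaIter x0 hLsymm hL1 hiter) fun k => hiter k ▸ hdesc (z k)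
  refine ⟨zs, objective_le_of_objectiveGrad_eq_zero x0 hL1 hb (by linarith) hGzs, hzs,
    fun w hw hws => ?_, hlim⟩
  have hGw := hb.grad_eq_zero_of_forall_le (by linarith) (sum_objectiveGrad x0 hLsymm hL1 w)
    fun w' _ => hw w'
  exact hb.eq_of_grad_eq_zero (by linarith) hGw hGzs (hws.trans hzs.symm)

/-- **DANA-D asymptotic convergence** (Theorem: Convergence of DANA-D).
Under the spectral assumption on `I - L H(x) L` restricted to the subspace orthogonal
to `1`, the DANA-D iteration with small enough step size converges to the unique
minimizer of `g` whose coordinate sum matches that of the initial condition. -/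
theorem dana_d_convergence
    (n : ℕ) (hn : 2 ≤ n)
    (L : Matrix (Fin n) (Fin n) ℝ)
    (hLsymm : L.IsSymm) (hLpsd : L.PosSemidef)
    (hL1 : L *ᵥ (fun _ => (1 : ℝ)) = 0)
    (hLker : ∀ v : Fin n → ℝ, L *ᵥ v = 0 → ∃ c : ℝ, v = fun _ => c)
    (f : Fin n → ℝ → ℝ) (δ Δ : Fin n → ℝ)
    (hf : ∀ i, ContDiff ℝ 2 (f i))
    (hδ : ∀ i, 0 < δ i)
    (hbounds : ∀ i s, δ i ≤ deriv (deriv (f i)) s ∧ deriv (deriv (f i)) s ≤ Δ i)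
    (x0 : Fin n → ℝ)
    (g : (Fin n → ℝ) → ℝ)
    (hg : g = fun z => ∑ i, f i (x0 i + (L *ᵥ z) i))
    (H : (Fin n → ℝ) → Matrix (Fin n) (Fin n) ℝ)
    (hH : H = fun x => Matrix.diagonal fun i => deriv (deriv (f i)) (x i))
    (gradg : (Fin n → ℝ) → (Fin n → ℝ))
    (hgradg : gradg = fun z => L *ᵥ fun i => deriv (f i) (x0 i + (L *ᵥ z) i))
    (q : ℕ)
    (A : (Fin n → ℝ) → Matrix (Fin n) (Fin n) ℝ)
    (hA : A = fun z => ∑ p ∈ Finset.range (q + 1),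
      (1 - L * H (fun i => x0 i + (L *ᵥ z) i) * L) ^ p)
    (ε : ℝ) (hε0 : 0 ≤ ε) (hε1 : ε < 1)
    (hspec : ∀ x v : Fin n → ℝ, (∑ i, v i) = 0 →
      |v ⬝ᵥ ((1 - L * H x * L) *ᵥ v)| ≤ ε * (v ⬝ᵥ v))
    (α : ℝ) (hα0 : 0 < α)
    (hα : α < 2 * (1 - ε) / ((n - 1 : ℝ) * (1 + ε) * (1 - ε ^ (q + 1))))
    (z0 : Fin n → ℝ) (z : ℕ → Fin n → ℝ)
    (hz0 : z 0 = z0)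
    (hiter : ∀ k, z (k + 1) = z k - α • (A (z k) *ᵥ gradg (z k))) :
    ∃ zstar : Fin n → ℝ,
      (∀ w, g zstar ≤ g w) ∧ (∑ i, zstar i = ∑ i, z0 i) ∧
      (∀ w, (∀ w', g w ≤ g w') → (∑ i, w i = ∑ i, z0 i) → w = zstar) ∧
      Tendsto z atTop (nhds zstar) :=
  dana_d_convergence_general n hn L hLsymm hL1 f hf x0 g hg H hH gradg hgradg q A hA ε hε0 hε1 hspec
    α hα0 hα z0 z hz0 hiter
end

section
/- Let p* be the unique minimizer of f(p) = Σ_{i=1}^n f_i(p_i) subject to 1_n^⊤ p = c, and let p^0 satisfy 1_n^⊤ p^0 = c. Then under the discretized Laplacian-flow iteration p^{k+1} = p^k − η L ∇f(p^k) with step size 0 < η < 2/(θ λ_n), where θ = max_i θ_i, the sequence (p^k) converges asymptotically to p*. -/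
/-!
`V(p) = f(p) - f(p*)` is a Lyapunov function. A step preserves `1ᵀp` because `1ᵀL = 0`, and by
the `θ`-smoothness of `f` together with `‖Lg‖² ≤ λ_n gᵀLg` it lowers `V` by at least
`η (1 - θηλ_n/2) gᵀLg`, where `g = ∇f(p)`. Strong convexity and the spectral gap of `L` on the
zero-sum hyperplane give the Polyak–Łojasiewicz bound `gᵀLg ≥ 2 ω λ₂ V` with `ω = min ω_i`, so
`V` decays geometrically, and strong convexity around the constrained minimiser turns this into
`p^k → p*`.
-/

open Filter Matrix Set

theorem ConvexOn.add_deriv_mul_sub_le {φ : ℝ → ℝ} (hφ : ConvexOn ℝ univ φ) {a : ℝ}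
    (ha : DifferentiableAt ℝ φ a) (b : ℝ) : φ a + deriv φ a * (b - a) ≤ φ b := by
  rcases lt_trichotomy a b with hab | rfl | hba
  · have h := hφ.deriv_le_slope (mem_univ a) (mem_univ b) hab ha
    rw [slope_def_field, le_div_iff₀ (sub_pos.2 hab)] at h
    linarith
  · simp
  · have h := hφ.slope_le_deriv (mem_univ b) (mem_univ a) hba ha
    rw [slope_def_field, div_le_iff₀ (sub_pos.2 hba)] at h
    linarith

theorem add_deriv_mul_sub_add_sq_le {φ : ℝ → ℝ} (hφ : Differentiable ℝ φ)
    (hφ' : Differentiable ℝ (deriv φ)) {m : ℝ} (hm : ∀ s, m ≤ deriv (deriv φ) s) (a b : ℝ) :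
    φ a + deriv φ a * (b - a) + m / 2 * (b - a) ^ 2 ≤ φ b := by
  set ψ : ℝ → ℝ := fun x => φ x - m / 2 * x ^ 2
  have hψ' : deriv ψ = fun x => deriv φ x - m * x := by
    funext x
    exact ((hφ x).hasDerivAt.sub ((hasDerivAt_pow 2 x).const_mul (m / 2))).deriv.trans (by ring)
  have hψ'' : deriv (deriv ψ) = fun x => deriv (deriv φ) x - m := by
    funext x
    rw [hψ']
    exact ((hφ' x).hasDerivAt.sub ((hasDerivAt_id x).const_mul m)).deriv.trans (by simp)
  have hψc : ConvexOn ℝ univ ψ := by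
    refine convexOn_univ_of_deriv2_nonneg (by fun_prop) ?_ fun x => ?_
    · rw [hψ']; fun_prop
    · simpa [hψ''] using hm x
  have h := hψc.add_deriv_mul_sub_le (b := b) (a := a) (by fun_prop)
  rw [hψ'] at h
  simp only [ψ] at h
  linarith

theorem le_add_deriv_mul_sub_add_sq {φ : ℝ → ℝ} (hφ : Differentiable ℝ φ)
    (hφ' : Differentiable ℝ (deriv φ)) {K : ℝ} (hK : ∀ s, deriv (deriv φ) s ≤ K) (a b : ℝ) :
    φ b ≤ φ a + deriv φ a * (b - a) + K / 2 * (b - a) ^ 2 := by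
  have hneg : deriv (-φ) = -deriv φ := deriv.neg'
  have h := add_deriv_mul_sub_add_sq_le (φ := -φ) (m := -K) hφ.neg
    (by rw [hneg]; exact hφ'.neg) (fun s => by simp [hneg, hK s]) a b
  simp only [hneg, Pi.neg_apply] at h
  linarith

theorem exists_pos_mul_norm_sq_le {E : Type*} [NormedAddCommGroup E] [NormedSpace ℝ E]
    [ProperSpace E] {Q : E → ℝ} (hQ : Continuous Q) (hsmul : ∀ (t : ℝ) v, Q (t • v) = t ^ 2 * Q v)
    (hpos : ∀ v, v ≠ 0 → 0 < Q v) : ∃ m > 0, ∀ v, m * ‖v‖ ^ 2 ≤ Q v := by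
  obtain ⟨m, hm, hmQ⟩ := (isCompact_sphere (0 : E) 1).exists_forall_le' hQ.continuousOn
    fun u hu => hpos u (ne_zero_of_mem_unit_sphere ⟨u, hu⟩)
  refine ⟨m, hm, fun v => ?_⟩
  rcases eq_or_ne v 0 with rfl | hv
  · simp [show Q 0 = 0 by simpa using hsmul 0 0]
  · have hnorm : ‖v‖ ≠ 0 := norm_ne_zero_iff.2 hv
    have hu : ‖v‖⁻¹ • v ∈ Metric.sphere (0 : E) 1 := by
      simp [norm_smul, hnorm]
    calc m * ‖v‖ ^ 2 ≤ Q (‖v‖⁻¹ • v) * ‖v‖ ^ 2 := by gcongr; exact hmQ _ hu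
      _ = Q v := by rw [hsmul, mul_comm, ← mul_assoc, ← mul_pow, mul_inv_cancel₀ hnorm]; simp

variable {ι : Type*} [Fintype ι]

theorem Matrix.IsSymm.sum_mulVec_eq_zero {L : Matrix ι ι ℝ} (hL : L.IsSymm)
    (hL1 : L *ᵥ (fun _ => (1 : ℝ)) = 0) (w : ι → ℝ) : ∑ i, (L *ᵥ w) i = 0 := by
  rw [← one_dotProduct, dotProduct_mulVec, ← mulVec_transpose, hL.eq]
  exact (congrArg (· ⬝ᵥ w) hL1).trans (zero_dotProduct w)

theorem Matrix.PosSemidef.exists_pos_mul_dotProduct_le_of_sum_eq_zero {L : Matrix ι ι ℝ}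
    (hL : L.PosSemidef) (hker : ∀ v, L *ᵥ v = 0 → ∃ c : ℝ, v = fun _ => c) :
    ∃ m > 0, ∀ v, ∑ i, v i = 0 → m * (v ⬝ᵥ v) ≤ v ⬝ᵥ (L *ᵥ v) := by
  have hnonneg : ∀ v, 0 ≤ v ⬝ᵥ (L *ᵥ v) := by simpa using hL.dotProduct_mulVec_nonneg
  have hpos : ∀ w : ι → ℝ, w ≠ 0 → 0 < w ⬝ᵥ (L *ᵥ w) + (∑ i, w i) ^ 2 := by
    intro w hw
    by_contra! hle
    have hLw : w ⬝ᵥ (L *ᵥ w) = 0 := by nlinarith [hnonneg w, sq_nonneg (∑ i, w i)]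
    have hsum : ∑ i, w i = 0 := by nlinarith [hnonneg w, sq_nonneg (∑ i, w i)]
    obtain ⟨c, rfl⟩ := hker w ((hL.dotProduct_mulVec_zero_iff w).1 (by simpa using hLw))
    obtain ⟨i, hi⟩ := Function.ne_iff.1 hw
    simp only [Finset.sum_const, Finset.card_univ, nsmul_eq_mul, mul_eq_zero] at hsum
    have : Nonempty ι := ⟨i⟩
    exact hi (hsum.resolve_left (Nat.cast_ne_zero.2 Fintype.card_ne_zero))
  -- adding `(∑ v)²` makes the form definite without changing it on the zero-sum hyperplane
  obtain ⟨m, hm, hmQ⟩ := exists_pos_mul_norm_sq_le (E := EuclideanSpace ℝ ι)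
    (Q := fun v => v.ofLp ⬝ᵥ (L *ᵥ v.ofLp) + (∑ i, v.ofLp i) ^ 2) (by fun_prop)
    (fun t v => by simp [mulVec_smul, ← Finset.mul_sum]; ring)
    fun v hv => hpos v.ofLp (by simpa using hv)
  refine ⟨m, hm, fun v hv => ?_⟩
  have h := hmQ (WithLp.toLp 2 v)
  rw [EuclideanSpace.real_norm_sq_eq] at h
  simpa [hv, dotProduct, sq] using h

theorem Matrix.PosSemidef.exists_symm_mul_self_eq {L : Matrix ι ι ℝ} (hL : L.PosSemidef) :
    ∃ M : Matrix ι ι ℝ, M.IsSymm ∧ M * M = L := by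
  classical
  open scoped MatrixOrder in
  exact ⟨CFC.sqrt L, by simpa using (CFC.sqrt_nonneg L).posSemidef.isHermitian,
    CFC.sqrt_mul_sqrt_self L hL.nonneg⟩

theorem Matrix.PosSemidef.mulVec_dotProduct_mulVec_le {L : Matrix ι ι ℝ} (hL : L.PosSemidef)
    {lam : ℝ} (hlam : ∀ v, v ⬝ᵥ (L *ᵥ v) ≤ lam * (v ⬝ᵥ v)) (v : ι → ℝ) :
    (L *ᵥ v) ⬝ᵥ (L *ᵥ v) ≤ lam * (v ⬝ᵥ (L *ᵥ v)) := by
  obtain ⟨M, hM, rfl⟩ := hL.exists_symm_mul_self_eq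
  have hMdot : ∀ u w, u ⬝ᵥ (M *ᵥ w) = (M *ᵥ u) ⬝ᵥ w := fun u w => by
    rw [dotProduct_mulVec, ← mulVec_transpose, hM.eq]
  calc ((M * M) *ᵥ v) ⬝ᵥ ((M * M) *ᵥ v) = (M *ᵥ v) ⬝ᵥ ((M * M) *ᵥ (M *ᵥ v)) := by
        simp only [← mulVec_mulVec, hMdot]
    _ ≤ lam * ((M *ᵥ v) ⬝ᵥ (M *ᵥ v)) := hlam _
    _ = lam * (v ⬝ᵥ ((M * M) *ᵥ v)) := by rw [← mulVec_mulVec, hMdot v]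

theorem tendsto_zero_of_le_mul_of_lt_one {u : ℕ → ℝ} {r : ℝ} (hu : ∀ k, 0 ≤ u k) (hr : r < 1)
    (h : ∀ k, u (k + 1) ≤ r * u k) : Tendsto u atTop (nhds 0) := by
  have hgeom : ∀ k, u k ≤ max r 0 ^ k * u 0 := fun k =>
    le_geom (le_max_right r 0) k fun j _ => (h j).trans (by gcongr; exacts [hu j, le_max_left r 0])
  refine squeeze_zero hu hgeom ?_
  simpa using (tendsto_pow_atTop_nhds_zero_of_lt_one (le_max_right r 0)
    (max_lt hr one_pos)).mul_const (u 0)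

theorem tendsto_of_dotProduct_sub_tendsto_zero {p : ℕ → ι → ℝ} {x : ι → ℝ}
    (h : Tendsto (fun k => (p k - x) ⬝ᵥ (p k - x)) atTop (nhds 0)) : Tendsto p atTop (nhds x) := by
  refine tendsto_pi_nhds.2 fun i => tendsto_iff_norm_sub_tendsto_zero.2 ?_
  refine squeeze_zero (g := fun k => √((p k - x) ⬝ᵥ (p k - x))) (fun _ => norm_nonneg _)
    (fun k => Real.abs_le_sqrt ?_) (by simpa using h.sqrt)
  rw [sq]
  exact Finset.single_le_sum (f := fun j => (p k - x) j * (p k - x) j)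
    (fun j _ => mul_self_nonneg _) (Finset.mem_univ i)

section Separable

variable {f : ι → ℝ → ℝ}

def separableSum (f : ι → ℝ → ℝ) (x : ι → ℝ) : ℝ := ∑ i, f i (x i)

noncomputable def separableGrad (f : ι → ℝ → ℝ) (x : ι → ℝ) : ι → ℝ :=
  fun i => deriv (f i) (x i)

theorem separableGrad_dotProduct_eq_zero_of_isMinOn (hf : ∀ i, Differentiable ℝ (f i))
    {c : ℝ} {x : ι → ℝ} (hmin : IsMinOn (separableSum f) {w | ∑ i, w i = c} x)
    (hx : ∑ i, x i = c) {v : ι → ℝ} (hv : ∑ i, v i = 0) : separableGrad f x ⬝ᵥ v = 0 := by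
  have hline : HasDerivAt (fun t : ℝ => separableSum f (x + t • v))
      (separableGrad f x ⬝ᵥ v) 0 := by
    refine HasDerivAt.fun_sum fun i _ => ?_
    have hlin : HasDerivAt (fun t : ℝ => x i + t * v i) (v i) 0 := by
      simpa using ((hasDerivAt_id (0 : ℝ)).mul_const (v i)).const_add (x i)
    have h := ((hf i) (x i + 0 * v i)).hasDerivAt.comp (0 : ℝ) hlin
    simpa [separableGrad, mul_comm, Function.comp_def] using h
  have hlocmin : IsLocalMin (fun t : ℝ => separableSum f (x + t • v)) 0 :=
    Eventually.of_forall fun t => by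
      simpa using hmin (show ∑ i, (x + t • v) i = c by
        simp [Finset.sum_add_distrib, ← Finset.mul_sum, hv, hx])
  exact hline.deriv.symm.trans hlocmin.deriv_eq_zero

theorem separableSum_add_separableGrad_dotProduct_le (hf : ∀ i, Differentiable ℝ (f i))
    (hf' : ∀ i, Differentiable ℝ (deriv (f i))) {m : ℝ}
    (hm : ∀ i s, m ≤ deriv (deriv (f i)) s) (x y : ι → ℝ) :
    separableSum f x + separableGrad f x ⬝ᵥ (y - x) + m / 2 * ((y - x) ⬝ᵥ (y - x)) ≤
      separableSum f y := by
  simp only [separableSum, separableGrad, dotProduct, Finset.mul_sum, ← Finset.sum_add_distrib]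
  exact Finset.sum_le_sum fun i _ => by
    simpa [sq] using add_deriv_mul_sub_add_sq_le (hf i) (hf' i) (hm i) (x i) (y i)

theorem separableSum_le_add_separableGrad_dotProduct (hf : ∀ i, Differentiable ℝ (f i))
    (hf' : ∀ i, Differentiable ℝ (deriv (f i))) {K : ℝ}
    (hK : ∀ i s, deriv (deriv (f i)) s ≤ K) (x y : ι → ℝ) :
    separableSum f y ≤
      separableSum f x + separableGrad f x ⬝ᵥ (y - x) + K / 2 * ((y - x) ⬝ᵥ (y - x)) := by
  simp only [separableSum, separableGrad, dotProduct, Finset.mul_sum, ← Finset.sum_add_distrib]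
  exact Finset.sum_le_sum fun i _ => by
    simpa [sq] using le_add_deriv_mul_sub_add_sq (hf i) (hf' i) (hK i) (x i) (y i)

theorem mul_dotProduct_sub_le_separableSum_sub_of_isMinOn (hf : ∀ i, Differentiable ℝ (f i))
    (hf' : ∀ i, Differentiable ℝ (deriv (f i))) {μ : ℝ} (hμ : ∀ i s, μ ≤ deriv (deriv (f i)) s)
    {pstar : ι → ℝ} (hmin : IsMinOn (separableSum f) {w | ∑ i, w i = ∑ i, pstar i} pstar)
    {x : ι → ℝ} (hx : ∑ i, x i = ∑ i, pstar i) :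
    μ / 2 * ((x - pstar) ⬝ᵥ (x - pstar)) ≤ separableSum f x - separableSum f pstar := by
  have hopt := separableGrad_dotProduct_eq_zero_of_isMinOn hf hmin rfl
    (v := x - pstar) (by simp [Finset.sum_sub_distrib, hx])
  linarith [separableSum_add_separableGrad_dotProduct_le hf hf' hμ pstar x]

end Separable

section LaplacianFlow

variable {L : Matrix ι ι ℝ} {f : ι → ℝ → ℝ}

theorem separableSum_sub_smul_mulVec_le (hL : L.PosSemidef) {lam : ℝ}
    (hlam : ∀ v, v ⬝ᵥ (L *ᵥ v) ≤ lam * (v ⬝ᵥ v)) (hf : ∀ i, Differentiable ℝ (f i))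
    (hf' : ∀ i, Differentiable ℝ (deriv (f i))) {θ : ℝ} (hθ : 0 ≤ θ)
    (hK : ∀ i s, deriv (deriv (f i)) s ≤ θ) (η : ℝ) (x : ι → ℝ) :
    separableSum f (x - η • (L *ᵥ separableGrad f x)) ≤ separableSum f x -
      η * (1 - θ * η * lam / 2) * (separableGrad f x ⬝ᵥ (L *ᵥ separableGrad f x)) := by
  set g := separableGrad f x
  have htaylor := separableSum_le_add_separableGrad_dotProduct hf hf' hK x (x - η • (L *ᵥ g))
  have hLg := hL.mulVec_dotProduct_mulVec_le hlam g
  simp only [sub_sub_cancel_left, dotProduct_neg, neg_dotProduct, dotProduct_smul,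
    smul_dotProduct, smul_eq_mul] at htaylor
  linarith [mul_le_mul_of_nonneg_left hLg (by positivity : 0 ≤ θ / 2 * η ^ 2)]

theorem two_mul_mul_mul_separableSum_sub_le [Nonempty ι] (hL : L.IsSymm)
    (hL1 : L *ᵥ (fun _ => (1 : ℝ)) = 0) {m : ℝ} (hm : 0 ≤ m)
    (hgap : ∀ v, ∑ i, v i = 0 → m * (v ⬝ᵥ v) ≤ v ⬝ᵥ (L *ᵥ v))
    (hf : ∀ i, Differentiable ℝ (f i)) (hf' : ∀ i, Differentiable ℝ (deriv (f i))) {μ : ℝ}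
    (hμ : 0 < μ) (hμf : ∀ i s, μ ≤ deriv (deriv (f i)) s) {x y : ι → ℝ}
    (hxy : ∑ i, x i = ∑ i, y i) :
    2 * μ * m * (separableSum f x - separableSum f y) ≤
      separableGrad f x ⬝ᵥ (L *ᵥ separableGrad f x) := by
  set g := separableGrad f x
  set a := (∑ i, g i) / Fintype.card ι
  -- `h` is the projection of `g` onto the zero-sum hyperplane, on which `L` is coercive
  set h := g - a • (1 : ι → ℝ)
  set e := x - y
  have hh : ∑ i, h i = 0 := by
    simp only [h, a, Pi.sub_apply, Pi.smul_apply, Pi.one_apply, smul_eq_mul, mul_one,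
      Finset.sum_sub_distrib, Finset.sum_const, Finset.card_univ, nsmul_eq_mul]
    field_simp
    ring
  have he : ∑ i, e i = 0 := by simp [e, Finset.sum_sub_distrib, hxy]
  have hLh : L *ᵥ h = L *ᵥ g := by
    rw [mulVec_sub, mulVec_smul, show L *ᵥ (1 : ι → ℝ) = 0 from hL1, smul_zero, sub_zero]
  have hq : h ⬝ᵥ (L *ᵥ h) = g ⬝ᵥ (L *ᵥ g) := by
    rw [hLh, sub_dotProduct, smul_dotProduct, one_dotProduct, hL.sum_mulVec_eq_zero hL1,
      smul_zero, sub_zero]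
  have hge : g ⬝ᵥ e = h ⬝ᵥ e := by
    rw [sub_dotProduct, smul_dotProduct, one_dotProduct, he, smul_zero, sub_zero]
  have hyoung : 0 ≤ (h - μ • e) ⬝ᵥ (h - μ • e) := by
    simpa using dotProduct_star_self_nonneg (h - μ • e)
  have htaylor := separableSum_add_separableGrad_dotProduct_le hf hf' hμf x y
  rw [show y - x = -e by simp [e], dotProduct_neg, neg_dotProduct, dotProduct_neg, neg_neg,
    hge] at htaylor
  simp only [sub_dotProduct, dotProduct_sub, smul_dotProduct, dotProduct_smul, smul_eq_mul,
    dotProduct_comm e h] at hyoung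
  have hdecay : 2 * μ * (separableSum f x - separableSum f y) ≤ h ⬝ᵥ h := by
    linarith [mul_le_mul_of_nonneg_left htaylor (mul_nonneg zero_le_two hμ.le)]
  calc 2 * μ * m * (separableSum f x - separableSum f y)
      = m * (2 * μ * (separableSum f x - separableSum f y)) := by ring
    _ ≤ m * (h ⬝ᵥ h) := mul_le_mul_of_nonneg_left hdecay hm
    _ ≤ h ⬝ᵥ (L *ᵥ h) := hgap h hh
    _ = g ⬝ᵥ (L *ᵥ g) := hq

theorem tendsto_laplacianFlow [Nonempty ι] (hL : L.PosSemidef)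
    (hL1 : L *ᵥ (fun _ => (1 : ℝ)) = 0) (hker : ∀ v, L *ᵥ v = 0 → ∃ c : ℝ, v = fun _ => c)
    {lam : ℝ} (hlam : ∀ v, v ⬝ᵥ (L *ᵥ v) ≤ lam * (v ⬝ᵥ v))
    (hf : ∀ i, Differentiable ℝ (f i)) (hf' : ∀ i, Differentiable ℝ (deriv (f i))) {μ θ : ℝ}
    (hμ : 0 < μ) (hbounds : ∀ i s, μ ≤ deriv (deriv (f i)) s ∧ deriv (deriv (f i)) s ≤ θ)
    {η : ℝ} (hη0 : 0 < η) (hη : η < 2 / (θ * lam)) {pstar : ι → ℝ}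
    (hmin : IsMinOn (separableSum f) {w | ∑ i, w i = ∑ i, pstar i} pstar) {p : ℕ → ι → ℝ}
    (hp0 : ∑ i, p 0 i = ∑ i, pstar i)
    (hiter : ∀ k, p (k + 1) = p k - η • (L *ᵥ separableGrad f (p k))) :
    Tendsto p atTop (nhds pstar) := by
  have hsymm : L.IsSymm := isHermitian_iff_isSymm.1 hL.isHermitian
  obtain ⟨i₀⟩ := ‹Nonempty ι›
  have hθ : 0 < θ := hμ.trans_le ((hbounds i₀ 0).1.trans (hbounds i₀ 0).2)
  have hθlam : 0 < θ * lam := by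
    by_contra! h
    linarith [div_nonpos_of_nonneg_of_nonpos zero_le_two h]
  set α := η * (1 - θ * η * lam / 2) with hα_def
  have hα : 0 < α := by
    have := (lt_div_iff₀ hθlam).1 hη
    exact mul_pos hη0 (by nlinarith)
  obtain ⟨m, hm, hgap⟩ := hL.exists_pos_mul_dotProduct_le_of_sum_eq_zero hker
  have hfeas : ∀ k, ∑ i, p k i = ∑ i, pstar i := by
    intro k
    induction k with
    | zero => exact hp0
    | succ k ih =>
      simp [hiter, Finset.sum_sub_distrib, ← Finset.mul_sum, hsymm.sum_mulVec_eq_zero hL1, ih]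
  set V := fun k => separableSum f (p k) - separableSum f pstar
  have hV : ∀ k, 0 ≤ V k := fun k => sub_nonneg.2 (hmin (hfeas k))
  have hstep : ∀ k, V (k + 1) ≤ (1 - α * (2 * μ * m)) * V k := by
    intro k
    have hdescent := separableSum_sub_smul_mulVec_le hL hlam hf hf' hθ.le
      (fun i s => (hbounds i s).2) η (p k)
    rw [← hα_def] at hdescent
    have hpl := two_mul_mul_mul_separableSum_sub_le hsymm hL1 hm.le hgap hf hf' hμ
      (fun i s => (hbounds i s).1) (hfeas k)
    simp only [V, hiter]
    linarith [mul_le_mul_of_nonneg_left hpl hα.le]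
  have hVlim := tendsto_zero_of_le_mul_of_lt_one hV
    (sub_lt_self 1 (mul_pos hα (mul_pos (mul_pos two_pos hμ) hm))) hstep
  refine tendsto_of_dotProduct_sub_tendsto_zero (squeeze_zero
    (fun k => by simpa using dotProduct_star_self_nonneg (p k - pstar)) (fun k => ?_)
    (by simpa using hVlim.const_mul (2 / μ)))
  have h := mul_dotProduct_sub_le_separableSum_sub_of_isMinOn hf hf'
    (fun i s => (hbounds i s).1) hmin (hfeas k)
  rw [div_mul_eq_mul_div, le_div_iff₀ hμ]
  linarith

end LaplacianFlow

theorem laplacian_flow_convergence_general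
    (n : ℕ) (hn : 2 ≤ n)
    (L : Matrix (Fin n) (Fin n) ℝ)
    (hLpsd : L.PosSemidef)
    (hL1 : L *ᵥ (fun _ => (1 : ℝ)) = 0)
    (hLker : ∀ v : Fin n → ℝ, L *ᵥ v = 0 → ∃ c : ℝ, v = fun _ => c)
    -- λ_n : the largest eigenvalue of L
    (lamN : ℝ)
    (hlamN_max : ∀ v : Fin n → ℝ, v ⬝ᵥ (L *ᵥ v) ≤ lamN * (v ⬝ᵥ v))
    -- costs: twice differentiable with 0 < ω_i ≤ f_i'' ≤ θ_i
    (f : Fin n → ℝ → ℝ) (ω θi : Fin n → ℝ)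
    (hf1 : ∀ i, Differentiable ℝ (f i))
    (hf2 : ∀ i, Differentiable ℝ (deriv (f i)))
    (hω : ∀ i, 0 < ω i)
    (hbounds : ∀ i s, ω i ≤ deriv (deriv (f i)) s ∧ deriv (deriv (f i)) s ≤ θi i)
    (θ : ℝ) (hθ_ub : ∀ i, θi i ≤ θ)
    (F : (Fin n → ℝ) → ℝ) (hF : F = fun p => ∑ i, f i (p i))
    (gradF : (Fin n → ℝ) → (Fin n → ℝ))
    (hgradF : gradF = fun p i => deriv (f i) (p i))
    -- p* : the unique minimizer of F subject to 1ᵀ p = c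
    (c : ℝ) (pstar : Fin n → ℝ)
    (hpstar_feas : ∑ i, pstar i = c)
    (hpstar_min : ∀ w : Fin n → ℝ, ∑ i, w i = c → F pstar ≤ F w)
    -- iteration
    (η : ℝ) (hη0 : 0 < η) (hη : η < 2 / (θ * lamN))
    (p : ℕ → Fin n → ℝ)
    (hp0 : ∑ i, p 0 i = c)
    (hiter : ∀ k, p (k + 1) = p k - η • (L *ᵥ gradF (p k))) :
    Tendsto p atTop (nhds pstar) := by
  subst hF hgradF hpstar_feas
  have : Nonempty (Fin n) := ⟨⟨0, by omega⟩⟩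
  obtain ⟨i₀, hi₀⟩ := Finite.exists_min ω
  exact tendsto_laplacianFlow hLpsd hL1 hLker hlamN_max hf1 hf2 (hω i₀)
    (fun i s => ⟨(hi₀ i).trans (hbounds i s).1, (hbounds i s).2.trans (hθ_ub i)⟩) hη0 hη
    hpstar_min hp0 hiter

/-- **Convergence of the discretized Laplacian flow** (Proposition: Convergence of
Discretized Laplacian Flow). Under feasibility of the initial condition, connectivity
of the graph, and the bounds on the second derivatives, the iteration
`p⁺ = p - η L ∇f(p)` with `0 < η < 2/(θ λ_n)` converges asymptotically to the unique
minimizer `p*` of `f` subject to `1ᵀ p = c`. -/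
theorem laplacian_flow_convergence
    (n : ℕ) (hn : 2 ≤ n)
    (L : Matrix (Fin n) (Fin n) ℝ)
    (hLsymm : L.IsSymm) (hLpsd : L.PosSemidef)
    (hL1 : L *ᵥ (fun _ => (1 : ℝ)) = 0)
    (hLker : ∀ v : Fin n → ℝ, L *ᵥ v = 0 → ∃ c : ℝ, v = fun _ => c)
    -- λ_n : the largest eigenvalue of L
    (lamN : ℝ)
    (hlamN_eig : ∃ v : Fin n → ℝ, v ≠ 0 ∧ L *ᵥ v = lamN • v)
    (hlamN_max : ∀ v : Fin n → ℝ, v ⬝ᵥ (L *ᵥ v) ≤ lamN * (v ⬝ᵥ v))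
    -- costs: twice differentiable with 0 < ω_i ≤ f_i'' ≤ θ_i
    (f : Fin n → ℝ → ℝ) (ω θi : Fin n → ℝ)
    (hf1 : ∀ i, Differentiable ℝ (f i))
    (hf2 : ∀ i, Differentiable ℝ (deriv (f i)))
    (hω : ∀ i, 0 < ω i)
    (hbounds : ∀ i s, ω i ≤ deriv (deriv (f i)) s ∧ deriv (deriv (f i)) s ≤ θi i)
    (θ : ℝ) (hθ_ub : ∀ i, θi i ≤ θ) (hθ_mem : ∃ i, θ = θi i)
    (F : (Fin n → ℝ) → ℝ) (hF : F = fun p => ∑ i, f i (p i))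
    (gradF : (Fin n → ℝ) → (Fin n → ℝ))
    (hgradF : gradF = fun p i => deriv (f i) (p i))
    -- p* : the unique minimizer of F subject to 1ᵀ p = c
    (c : ℝ) (pstar : Fin n → ℝ)
    (hpstar_feas : ∑ i, pstar i = c)
    (hpstar_min : ∀ w : Fin n → ℝ, ∑ i, w i = c → F pstar ≤ F w)
    (hpstar_uniq : ∀ w : Fin n → ℝ, ∑ i, w i = c →
      (∀ u : Fin n → ℝ, ∑ i, u i = c → F w ≤ F u) → w = pstar)
    -- iteration
    (η : ℝ) (hη0 : 0 < η) (hη : η < 2 / (θ * lamN))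
    (p : ℕ → Fin n → ℝ)
    (hp0 : ∑ i, p 0 i = c)
    (hiter : ∀ k, p (k + 1) = p k - η • (L *ᵥ gradF (p k))) :
    Tendsto p atTop (nhds pstar) :=
  laplacian_flow_convergence_general n hn L hLpsd hL1 hLker lamN hlamN_max f ω θi hf1 hf2 hω hbounds
    θ hθ_ub F hF gradF hgradF c pstar hpstar_feas hpstar_min η hη0 hη p hp0 hiter
end

section
/- Let F : ℝ^m → ℝ be twice continuously differentiable and satisfy the cubic upper bound F(w) ≤ F(x) + ∇F(x)^⊤(w−x) + ½(w−x)^⊤∇²F(x)(w−x) + (ρ/6)‖w−x‖³ for all w, x ∈ ℝ^m (as holds when ∇²F is ρ-Lipschitz). Fix x ∈ ℝ^m, c > 0, ε > 0, a vector g ∈ ℝ^m with ‖g − ∇F(x)‖ ≤ cε, and a symmetric matrix H with ‖(H − ∇²F(x))v‖ ≤ c√(ρε)‖v‖ for all v, and define the cubic-regularized submodel m(w) = F(x) + g^⊤(w−x) + ½(w−x)^⊤H(w−x) + (ρ/6)‖w−x‖³. If w ∈ ℝ^m satisfies m(w) − m(x) < −cε‖w−x‖ − c√(ρε)‖w−x‖²,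 then F(w) < F(x). -/
open RealInnerProductSpace

/-- **Deterministic descent step of the DiSCRN update** (key step in the proof of the
Convergence of DiSCRN theorem). If the inexact gradient/Hessian estimates are
`(cε, c√(ρε))`-accurate and the subsolver output `w` decreases the cubic-regularized
submodel by more than `cε‖w-x‖ + c√(ρε)‖w-x‖²`, then the true objective strictly
decreases. -/
theorem discrn_descent_step
    (m : ℕ) (F : EuclideanSpace ℝ (Fin m) → ℝ)
    (hF : ContDiff ℝ 2 F)
    (ρ : ℝ) (hρ : 0 < ρ)
    -- cubic upper bound (as follows from ρ-Lipschitzness of ∇²F)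
    (hcubic : ∀ w x : EuclideanSpace ℝ (Fin m),
      F w ≤ F x + ⟪gradient F x, w - x⟫ +
        (1 / 2) * ⟪(fderiv ℝ (gradient F) x) (w - x), w - x⟫ +
        ρ / 6 * ‖w - x‖ ^ 3)
    (x : EuclideanSpace ℝ (Fin m)) (c ε : ℝ) (hc : 0 < c) (hε : 0 < ε)
    -- inexact gradient estimate
    (g : EuclideanSpace ℝ (Fin m)) (hg : ‖g - gradient F x‖ ≤ c * ε)
    -- inexact symmetric Hessian estimate
    (H : EuclideanSpace ℝ (Fin m) →L[ℝ] EuclideanSpace ℝ (Fin m))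
    (hHsym : ∀ v w : EuclideanSpace ℝ (Fin m), ⟪H v, w⟫ = ⟪v, H w⟫)
    (hH : ∀ v : EuclideanSpace ℝ (Fin m),
      ‖H v - (fderiv ℝ (gradient F) x) v‖ ≤ c * Real.sqrt (ρ * ε) * ‖v‖)
    -- cubic-regularized submodel
    (mdl : EuclideanSpace ℝ (Fin m) → ℝ)
    (hmdl : mdl = fun w => F x + ⟪g, w - x⟫ + (1 / 2) * ⟪H (w - x), w - x⟫ +
      ρ / 6 * ‖w - x‖ ^ 3)
    -- sufficient submodel decrease
    (w : EuclideanSpace ℝ (Fin m))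
    (hdec : mdl w - mdl x <
      -(c * ε) * ‖w - x‖ - c * Real.sqrt (ρ * ε) * ‖w - x‖ ^ 2) :
    F w < F x := by
  set d := w - x with hd
  have hmx : mdl x = F x := by simp [hmdl]
  have h1 : ⟪gradient F x - g, d⟫ ≤ c * ε * ‖d‖ := by
    calc ⟪gradient F x - g, d⟫ ≤ ‖gradient F x - g‖ * ‖d‖ := real_inner_le_norm _ _
    _ ≤ c * ε * ‖d‖ := by
        have : ‖gradient F x - g‖ = ‖g - gradient F x‖ := by rw [norm_sub_rev]
        nlinarith [norm_nonneg d, norm_nonneg (g - gradient F x)]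
  have h2 : ⟪(fderiv ℝ (gradient F) x) d - H d, d⟫ ≤ c * Real.sqrt (ρ * ε) * ‖d‖ ^ 2 := by
    calc ⟪(fderiv ℝ (gradient F) x) d - H d, d⟫ ≤ ‖(fderiv ℝ (gradient F) x) d - H d‖ * ‖d‖ :=
          real_inner_le_norm _ _
    _ ≤ c * Real.sqrt (ρ * ε) * ‖d‖ ^ 2 := by
        have h := hH d
        rw [norm_sub_rev] at h
        nlinarith [norm_nonneg d, norm_nonneg (H d - (fderiv ℝ (gradient F) x) d)]
  have hkey : F w ≤ mdl w + c * ε * ‖d‖ + (1/2) * (c * Real.sqrt (ρ * ε) * ‖d‖ ^ 2) := by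
    have h3 := hcubic w x
    have e1 : ⟪gradient F x, d⟫ = ⟪g, d⟫ + ⟪gradient F x - g, d⟫ := by
      rw [← inner_add_left]; congr 1; abel
    have e2 : ⟪(fderiv ℝ (gradient F) x) d, d⟫
        = ⟪H d, d⟫ + ⟪(fderiv ℝ (gradient F) x) d - H d, d⟫ := by
      rw [← inner_add_left]; congr 1; abel
    simp only [hmdl]
    rw [← hd] at h3 ⊢
    nlinarith [h3, h1, h2]
  have hsq : Real.sqrt (ρ * ε) > 0 := Real.sqrt_pos.2 (by positivity)
  have hmw : mdl w < F x - c * ε * ‖d‖ - c * Real.sqrt (ρ * ε) * ‖d‖ ^ 2 := by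
    rw [hmx] at hdec; linarith
  have hdn : 0 ≤ ‖d‖ := norm_nonneg d
  nlinarith [hkey, hmw, mul_nonneg (mul_nonneg hc.le hsq.le) (sq_nonneg ‖d‖)]
end

section
/- Let p* be the unique minimizer of f(p) = Σ_{i=1}^n f_i(p_i) subject to 1_n^⊤ p = c, and let p ∈ ℝ^n satisfy 1_n^⊤ p = c. Then λ_2 ω ‖p − p*‖ ≤ ‖L ∇f(p)‖, where ω = min_i ω_i. Consequently, if p^+ = p − η L ∇f(p) for some η > 0 and |p_i^+ − p_i| ≤ Δ η λ_2 ω / √n for all i, then ‖p − p*‖ ≤ Δ. -/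
open Matrix Finset
open scoped BigOperators

/-!
Write `x = p - p*`. First-order optimality of `p*` on the hyperplane `1ᵀp = c` makes `∇f(p*)`
orthogonal to `x`, so strong convexity gives `ω‖x‖² ≤ ⟨x, ∇f(p)⟩ = ⟨x, g₀⟩`, where `g₀` is
`∇f(p)` minus its mean; hence `ω‖x‖ ≤ ‖g₀‖`. Since `g₀ ⊥ 1` and `L1 = 0`, the Rayleigh bound
gives `λ₂‖g₀‖² ≤ ⟨g₀, L g₀⟩ = ⟨g₀, L∇f(p)⟩ ≤ ‖g₀‖‖L∇f(p)‖`. The stopping criterion bounds every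
component of `L∇f(p)` by `Δλ₂ω/√n`, hence its norm by `Δλ₂ω`.
-/

section

variable {ι : Type*} [Fintype ι]

lemma mul_sq_sub_le_of_le_deriv {g : ℝ → ℝ} (hg : Differentiable ℝ g) {ω : ℝ}
    (hω : ∀ s, ω ≤ deriv g s) (a b : ℝ) : ω * (a - b) ^ 2 ≤ (g a - g b) * (a - b) := by
  rcases le_total a b with hab | hba
  · nlinarith [mul_sub_le_image_sub_of_le_deriv hg hω hab]
  · nlinarith [mul_sub_le_image_sub_of_le_deriv hg hω hba]

lemma sum_deriv_mul_eq_zero_of_isMinOn {f : ι → ℝ → ℝ} {q : ι → ℝ}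
    (hf : ∀ i, DifferentiableAt ℝ (f i) (q i)) {c : ℝ} (hq : ∑ i, q i = c)
    (hmin : IsMinOn (fun w => ∑ i, f i (w i)) {w | ∑ i, w i = c} q)
    {d : ι → ℝ} (hd : ∑ i, d i = 0) : ∑ i, deriv (f i) (q i) * d i = 0 := by
  have hline : HasDerivAt (fun t : ℝ => ∑ i, f i (q i + t * d i))
      (∑ i, deriv (f i) (q i) * d i) 0 :=
    HasDerivAt.fun_sum fun i _ => HasDerivAt.comp_of_eq 0 (hf i).hasDerivAt
      ((hasDerivAt_mul_const (d i)).const_add (q i)) (by simp)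
  refine IsLocalMin.hasDerivAt_eq_zero (Filter.Eventually.of_forall fun t => ?_) hline
  simpa using isMinOn_iff.1 hmin _
    (by rw [Set.mem_ofPred_eq, sum_add_distrib, ← mul_sum, hd, mul_zero, add_zero, hq])

lemma mul_sum_sq_sub_le_sum_sub_mul_deriv_of_isMinOn {f : ι → ℝ → ℝ}
    (hf1 : ∀ i, Differentiable ℝ (f i)) (hf2 : ∀ i, Differentiable ℝ (deriv (f i))) {ω : ℝ}
    (hω : ∀ i s, ω ≤ deriv (deriv (f i)) s) {c : ℝ} {q : ι → ℝ} (hq : ∑ i, q i = c)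
    (hmin : IsMinOn (fun w => ∑ i, f i (w i)) {w | ∑ i, w i = c} q)
    {p : ι → ℝ} (hp : ∑ i, p i = c) :
    ω * ∑ i, (p i - q i) ^ 2 ≤ ∑ i, (p i - q i) * deriv (f i) (p i) := by
  have hfoc : ∑ i, deriv (f i) (q i) * (p i - q i) = 0 :=
    sum_deriv_mul_eq_zero_of_isMinOn (fun i => (hf1 i).differentiableAt) hq hmin
      (by rw [sum_sub_distrib, hp, hq, sub_self])
  calc ω * ∑ i, (p i - q i) ^ 2
      ≤ ∑ i, (deriv (f i) (p i) - deriv (f i) (q i)) * (p i - q i) := by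
        rw [mul_sum]
        exact sum_le_sum fun i _ => mul_sq_sub_le_of_le_deriv (hf2 i) (hω i) _ _
    _ = ∑ i, (p i - q i) * deriv (f i) (p i) := by
        rw [← sub_zero (∑ i, (p i - q i) * _), ← hfoc, ← sum_sub_distrib]
        exact sum_congr rfl fun i _ => by ring

lemma sum_sub_expect_eq_zero (v : ι → ℝ) : ∑ i, (v i - 𝔼 j, v j) = 0 := by
  simp [sum_sub_distrib]

lemma sum_mul_sub_const_of_sum_eq_zero {x : ι → ℝ} (hx : ∑ i, x i = 0) (y : ι → ℝ) (a : ℝ) :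
    ∑ i, x i * (y i - a) = ∑ i, x i * y i := by
  simp only [mul_sub, sum_sub_distrib, ← sum_mul, hx, zero_mul, sub_zero]

lemma mulVec_sub_const {R : Type*} [CommRing R] {L : Matrix ι ι R}
    (hL : L *ᵥ (fun _ => (1 : R)) = 0) (v : ι → R) (a : R) :
    L *ᵥ (fun i => v i - a) = L *ᵥ v := by
  have hv : (fun i => v i - a) = v - a • fun _ => (1 : R) := by ext; simp
  rw [hv, mulVec_sub, mulVec_smul, hL, smul_zero, sub_zero]

lemma mul_sqrt_sum_sq_le_of_mul_sum_sq_le {a : ℝ} {x y : ι → ℝ}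
    (h : a * ∑ i, x i ^ 2 ≤ ∑ i, x i * y i) :
    a * √(∑ i, x i ^ 2) ≤ √(∑ i, y i ^ 2) := by
  have hcs := Real.sum_mul_le_sqrt_mul_sqrt univ x y
  rw [← Real.sq_sqrt (sum_nonneg fun i _ => sq_nonneg (x i))] at h
  rcases (Real.sqrt_nonneg (∑ i, x i ^ 2)).eq_or_lt with hx | hx
  · rw [← hx, mul_zero]
    exact Real.sqrt_nonneg _
  · nlinarith

lemma sqrt_sum_sq_le_of_abs_le {v : ι → ℝ} {B : ℝ} (hB : 0 ≤ B)
    (hv : ∀ i, |v i| ≤ B / √(Fintype.card ι)) : √(∑ i, v i ^ 2) ≤ B := by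
  set m : ℝ := (Fintype.card ι : ℝ)
  rw [Real.sqrt_le_left hB]
  calc ∑ i, v i ^ 2 ≤ ∑ _i : ι, (B / √m) ^ 2 := sum_le_sum fun i _ => by
        rw [← sq_abs]
        exact pow_le_pow_left₀ (abs_nonneg _) (hv i) 2
    _ = m * (B ^ 2 / m) := by simp [m, div_pow]
    _ ≤ B ^ 2 := by
        rcases (show (0 : ℝ) ≤ m by positivity).eq_or_lt with hm | hm
        · rw [← hm, zero_mul]
          positivity
        · rw [mul_div_cancel₀ _ hm.ne']

end

theorem discrn_stopping_criterion_general
    (n : ℕ)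
    (L : Matrix (Fin n) (Fin n) ℝ)
    (hL1 : L *ᵥ (fun _ => (1 : ℝ)) = 0)
    -- λ₂ : the smallest nonzero (Fiedler) eigenvalue of L
    (lam2 : ℝ) (hlam2_pos : 0 < lam2)
    (hlam2_min : ∀ v : Fin n → ℝ, (∑ i, v i) = 0 → lam2 * (v ⬝ᵥ v) ≤ v ⬝ᵥ (L *ᵥ v))
    -- costs: twice differentiable with 0 < ω ≤ f_i''
    (f : Fin n → ℝ → ℝ)
    (hf1 : ∀ i, Differentiable ℝ (f i))
    (hf2 : ∀ i, Differentiable ℝ (deriv (f i)))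
    (ω : ℝ) (hω : 0 < ω)
    (hω_lb : ∀ i s, ω ≤ deriv (deriv (f i)) s)
    (F : (Fin n → ℝ) → ℝ) (hF : F = fun p => ∑ i, f i (p i))
    (gradF : (Fin n → ℝ) → (Fin n → ℝ))
    (hgradF : gradF = fun p i => deriv (f i) (p i))
    -- p* : the unique minimizer of F subject to 1ᵀ p = c
    (c : ℝ) (pstar : Fin n → ℝ)
    (hpstar_feas : ∑ i, pstar i = c)
    (hpstar_min : ∀ w : Fin n → ℝ, ∑ i, w i = c → F pstar ≤ F w)
    -- a feasible point p
    (p : Fin n → ℝ) (hp : ∑ i, p i = c)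
    (Δ : ℝ) (hΔ : 0 < Δ) :
    lam2 * ω * Real.sqrt (∑ i, (p i - pstar i) ^ 2) ≤
      Real.sqrt (∑ i, ((L *ᵥ gradF p) i) ^ 2) ∧
    (∀ η : ℝ, 0 < η →
      ∀ pplus : Fin n → ℝ, pplus = p - η • (L *ᵥ gradF p) →
        (∀ i, |pplus i - p i| ≤ Δ * η * lam2 * ω / Real.sqrt n) →
        Real.sqrt (∑ i, (p i - pstar i) ^ 2) ≤ Δ) := by
  subst hF hgradF
  beta_reduce
  set g : Fin n → ℝ := fun i => deriv (f i) (p i)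
  set g₀ : Fin n → ℝ := fun i => g i - 𝔼 j, g j
  have hx : ∑ i, (p i - pstar i) = 0 := by rw [sum_sub_distrib, hp, hpstar_feas, sub_self]
  have hω_g₀ : ω * √(∑ i, (p i - pstar i) ^ 2) ≤ √(∑ i, g₀ i ^ 2) := by
    refine mul_sqrt_sum_sq_le_of_mul_sum_sq_le ?_
    rw [sum_mul_sub_const_of_sum_eq_zero hx]
    exact mul_sum_sq_sub_le_sum_sub_mul_deriv_of_isMinOn hf1 hf2 hω_lb hpstar_feas
      (isMinOn_iff.2 hpstar_min) hp
  have hlam2_g₀ : lam2 * √(∑ i, g₀ i ^ 2) ≤ √(∑ i, ((L *ᵥ g) i) ^ 2) := by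
    refine mul_sqrt_sum_sq_le_of_mul_sum_sq_le ?_
    simpa only [dotProduct, sq, show L *ᵥ g₀ = L *ᵥ g from mulVec_sub_const hL1 g _] using
      hlam2_min g₀ (sum_sub_expect_eq_zero g)
  have hcontr : lam2 * ω * √(∑ i, (p i - pstar i) ^ 2) ≤ √(∑ i, ((L *ᵥ g) i) ^ 2) := by
    rw [mul_assoc]
    exact (mul_le_mul_of_nonneg_left hω_g₀ hlam2_pos.le).trans hlam2_g₀
  refine ⟨hcontr, fun η hη _ hpplus hstop => ?_⟩
  have hLg : √(∑ i, ((L *ᵥ g) i) ^ 2) ≤ Δ * lam2 * ω := by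
    refine sqrt_sum_sq_le_of_abs_le (by positivity) fun i => le_of_mul_le_mul_left ?_ hη
    have hi := hstop i
    rw [hpplus, Pi.sub_apply, sub_sub_cancel_left, abs_neg, Pi.smul_apply, smul_eq_mul, abs_mul,
      abs_of_pos hη] at hi
    rw [Fintype.card_fin]
    exact hi.trans_eq (by ring)
  exact le_of_mul_le_mul_left ((hcontr.trans hLg).trans_eq (by ring)) (by positivity)

/-- **Locally checkable stopping criterion for the inner-loop solver** (key step in
the proof of the Convergence of DiSCRN theorem): for any feasible `p`,
`λ₂ ω ‖p - p*‖ ≤ ‖L ∇f(p)‖`; consequently, if the Laplacian-gradient step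
`p⁺ = p - η L ∇f(p)` satisfies the componentwise stopping criterion
`|pᵢ⁺ - pᵢ| ≤ Δ η λ₂ ω / √n`, then `‖p - p*‖ ≤ Δ`. -/
theorem discrn_stopping_criterion
    (n : ℕ) (hn : 2 ≤ n)
    (L : Matrix (Fin n) (Fin n) ℝ)
    (hLsymm : L.IsSymm) (hLpsd : L.PosSemidef)
    (hL1 : L *ᵥ (fun _ => (1 : ℝ)) = 0)
    (hLker : ∀ v : Fin n → ℝ, L *ᵥ v = 0 → ∃ c : ℝ, v = fun _ => c)
    -- λ₂ : the smallest nonzero (Fiedler) eigenvalue of L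
    (lam2 : ℝ) (hlam2_pos : 0 < lam2)
    (hlam2_eig : ∃ v : Fin n → ℝ, v ≠ 0 ∧ (∑ i, v i) = 0 ∧ L *ᵥ v = lam2 • v)
    (hlam2_min : ∀ v : Fin n → ℝ, (∑ i, v i) = 0 → lam2 * (v ⬝ᵥ v) ≤ v ⬝ᵥ (L *ᵥ v))
    -- costs: twice differentiable with 0 < ω ≤ f_i''
    (f : Fin n → ℝ → ℝ)
    (hf1 : ∀ i, Differentiable ℝ (f i))
    (hf2 : ∀ i, Differentiable ℝ (deriv (f i)))
    (ω : ℝ) (hω : 0 < ω)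
    (hω_lb : ∀ i s, ω ≤ deriv (deriv (f i)) s)
    (F : (Fin n → ℝ) → ℝ) (hF : F = fun p => ∑ i, f i (p i))
    (gradF : (Fin n → ℝ) → (Fin n → ℝ))
    (hgradF : gradF = fun p i => deriv (f i) (p i))
    -- p* : the unique minimizer of F subject to 1ᵀ p = c
    (c : ℝ) (pstar : Fin n → ℝ)
    (hpstar_feas : ∑ i, pstar i = c)
    (hpstar_min : ∀ w : Fin n → ℝ, ∑ i, w i = c → F pstar ≤ F w)
    (hpstar_uniq : ∀ w : Fin n → ℝ, ∑ i, w i = c →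
      (∀ u : Fin n → ℝ, ∑ i, u i = c → F w ≤ F u) → w = pstar)
    -- a feasible point p
    (p : Fin n → ℝ) (hp : ∑ i, p i = c)
    (Δ : ℝ) (hΔ : 0 < Δ) :
    lam2 * ω * Real.sqrt (∑ i, (p i - pstar i) ^ 2) ≤
      Real.sqrt (∑ i, ((L *ᵥ gradF p) i) ^ 2) ∧
    (∀ η : ℝ, 0 < η →
      ∀ pplus : Fin n → ℝ, pplus = p - η • (L *ᵥ gradF p) →
        (∀ i, |pplus i - p i| ≤ Δ * η * lam2 * ω / Real.sqrt n) →
        Real.sqrt (∑ i, (p i - pstar i) ^ 2) ≤ Δ) :=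
  discrn_stopping_criterion_general n L hL1 lam2 hlam2_pos hlam2_min f hf1 hf2 ω hω hω_lb F hF gradF
    hgradF c pstar hpstar_feas hpstar_min p hp Δ hΔ
end

section
/- The open hypercube (0,1)^n is forward invariant under the BinPAC dynamics: every solution x : [0,T̄) → ℝ^n of ẋ = (|H(x)|_m)^{-1} diag((x_i − x_i²)/T) (Wx + v + (T/τ)(log(1/x_i − 1))_i) with x(0) ∈ (0,1)^n satisfies x(t) ∈ (0,1)^n for all t ∈ [0,T̄). -/
/-!
Near a face of the cube the barrier term `(T/τ) diag(1/(xᵢ - xᵢ²))` dominates the Hessian, and the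
PT-inverse undoes it: since `H (|H|ₘ)⁻¹` has entries of size at most one and `(|H|ₘ)⁻¹` entries of
size at most `1/m`, row `i` of `(|H|ₘ)⁻¹` is `O(xᵢ - xᵢ²)`. The drive vector is bounded on the cube
because `(s - s²) log (1/s - 1)` is, so `|ẋᵢ| ≤ K xᵢ (1 - xᵢ)` with `K` uniform. Comparing with
`e^{-Kt}` then keeps both `xᵢ` and `1 - xᵢ` positive up to the first exit time, which therefore
does not exist.
-/

open Matrix

/-- The Positive-definite Truncated inverse (PT-inverse) with parameter `m` of a
symmetric matrix `A = QᵀΛQ`: eigenvalues of magnitude `≥ m` are replaced by their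
absolute value, eigenvalues of magnitude `< m` by `m`, and the result is inverted
(junk value `0` on non-Hermitian input). -/
noncomputable def PTinv {n : ℕ} (m : ℝ) (A : Matrix (Fin n) (Fin n) ℝ) :
    Matrix (Fin n) (Fin n) ℝ :=
  if hA : A.IsHermitian then
    (Matrix.IsHermitian.eigenvectorUnitary hA : Matrix (Fin n) (Fin n) ℝ) *
      Matrix.diagonal (fun i => (max |hA.eigenvalues i| m)⁻¹) *
      star (Matrix.IsHermitian.eigenvectorUnitary hA : Matrix (Fin n) (Fin n) ℝ)
  else 0

open Set Unitary

section Unitary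

variable {ι : Type*} [Fintype ι] [DecidableEq ι]

lemma Matrix.sum_sq_apply_of_mem_unitaryGroup {U : Matrix ι ι ℝ} (hU : U ∈ unitaryGroup ι ℝ)
    (i : ι) : ∑ k, U i k ^ 2 = 1 := by
  simpa [mul_apply, one_apply, sq] using congrFun₂ (mem_unitaryGroup_iff.mp hU) i i

lemma Matrix.abs_unitary_mul_diagonal_mul_star_apply_le {U : Matrix ι ι ℝ}
    (hU : U ∈ unitaryGroup ι ℝ) {d : ι → ℝ} {c : ℝ} (hd : ∀ k, |d k| ≤ c) (i j : ι) :
    |(U * diagonal d * star U) i j| ≤ c := by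
  -- AM-GM on `|U i k| |U j k|`, then both rows of `U` are unit vectors.
  have hterm : ∀ k, |U i k * d k * U j k| ≤ c * ((U i k ^ 2 + U j k ^ 2) / 2) := fun k => by
    rw [abs_mul, abs_mul]
    nlinarith [hd k, abs_nonneg (d k), sq_abs (U i k), sq_abs (U j k),
      sq_nonneg (|U i k| - |U j k|), mul_nonneg (abs_nonneg (U i k)) (abs_nonneg (U j k))]
  calc |(U * diagonal d * star U) i j| = |∑ k, U i k * d k * U j k| := by
        simp [mul_apply, diagonal_apply, mul_comm]
    _ ≤ ∑ k, c * ((U i k ^ 2 + U j k ^ 2) / 2) :=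
        (Finset.abs_sum_le_sum_abs _ _).trans (Finset.sum_le_sum fun k _ => hterm k)
    _ = c := by
        rw [← Finset.mul_sum, ← Finset.sum_div, Finset.sum_add_distrib,
          sum_sq_apply_of_mem_unitaryGroup hU, sum_sq_apply_of_mem_unitaryGroup hU]
        ring

end Unitary

section PTinv

variable {n : ℕ} {m : ℝ}

lemma PTinv_of_isHermitian {A : Matrix (Fin n) (Fin n) ℝ} (hA : A.IsHermitian) :
    PTinv m A = conjStarAlgAut ℝ _ hA.eigenvectorUnitary
      (diagonal fun k => (max |hA.eigenvalues k| m)⁻¹) := by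
  rw [PTinv, dif_pos hA, conjStarAlgAut_apply]

lemma mul_PTinv_of_isHermitian {A : Matrix (Fin n) (Fin n) ℝ} (hA : A.IsHermitian) :
    A * PTinv m A = conjStarAlgAut ℝ _ hA.eigenvectorUnitary
      (diagonal fun k => hA.eigenvalues k / max |hA.eigenvalues k| m) := by
  rw [PTinv_of_isHermitian hA]
  nth_rewrite 1 [hA.spectral_theorem]
  rw [← map_mul, diagonal_mul_diagonal]
  rfl

lemma abs_PTinv_apply_le (hm : 0 < m) (A : Matrix (Fin n) (Fin n) ℝ) (i j : Fin n) :
    |PTinv m A i j| ≤ m⁻¹ := by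
  by_cases hA : A.IsHermitian
  · rw [PTinv_of_isHermitian hA, conjStarAlgAut_apply]
    refine abs_unitary_mul_diagonal_mul_star_apply_le (SetLike.coe_mem _) (fun k => ?_) i j
    rw [abs_inv, abs_of_pos (lt_max_of_lt_right hm)]
    exact inv_anti₀ hm (le_max_right _ _)
  · rw [PTinv, dif_neg hA]
    simp [hm.le]

lemma abs_mul_PTinv_apply_le (hm : 0 < m) (A : Matrix (Fin n) (Fin n) ℝ) (i j : Fin n) :
    |(A * PTinv m A) i j| ≤ 1 := by
  by_cases hA : A.IsHermitian
  · rw [mul_PTinv_of_isHermitian hA, conjStarAlgAut_apply]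
    refine abs_unitary_mul_diagonal_mul_star_apply_le (SetLike.coe_mem _) (fun k => ?_) i j
    rw [abs_div, abs_of_pos (lt_max_of_lt_right hm), div_le_one (lt_max_of_lt_right hm)]
    exact le_max_left _ _
  · rw [PTinv, dif_neg hA]
    simp

lemma abs_PTinv_neg_add_smul_diagonal_apply_le (hm : 0 < m) (W : Matrix (Fin n) (Fin n) ℝ)
    (c : ℝ) (d : Fin n → ℝ) (i j : Fin n) :
    |c * d i| * |PTinv m (-W + c • diagonal d) i j| ≤ 1 + (∑ k, |W i k|) / m := by
  set A := -W + c • diagonal d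
  set P := PTinv m A
  have hsplit : c * d i * P i j = (A * P) i j + (W * P) i j := by
    rw [← Matrix.add_apply, ← add_mul, neg_add_cancel_comm, smul_mul, Matrix.smul_apply,
      diagonal_mul, smul_eq_mul, mul_assoc]
  have hWP : |(W * P) i j| ≤ (∑ k, |W i k|) / m := by
    rw [div_eq_mul_inv, Finset.sum_mul, mul_apply]
    refine (Finset.abs_sum_le_sum_abs _ _).trans (Finset.sum_le_sum fun k _ => ?_)
    rw [abs_mul]
    exact mul_le_mul_of_nonneg_left (abs_PTinv_apply_le hm A k j) (abs_nonneg _)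
  calc |c * d i| * |P i j| = |(A * P) i j + (W * P) i j| := by rw [← abs_mul, hsplit]
    _ ≤ 1 + (∑ k, |W i k|) / m :=
        (abs_add_le _ _).trans (add_le_add (abs_mul_PTinv_apply_le hm A i j) hWP)

end PTinv

section BinPAC

variable {ι : Type*} [Fintype ι] {n : ℕ} {m T τ : ℝ}

noncomputable def hopfieldHessian [DecidableEq ι] (W : Matrix ι ι ℝ) (T τ : ℝ) (y : ι → ℝ) :
    Matrix ι ι ℝ :=
  -W + (T / τ) • diagonal fun i => 1 / (y i - y i ^ 2)

noncomputable def binpacDrive (W : Matrix ι ι ℝ) (v : ι → ℝ) (T τ : ℝ) (y : ι → ℝ) : ι → ℝ :=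
  fun i => (y i - y i ^ 2) / T * ((W *ᵥ y) i + v i + (T / τ) * Real.log (1 / y i - 1))

lemma abs_sub_sq_mul_log_inv_sub_one_le {y : ℝ} (hy : y ∈ Ioo 0 1) :
    |(y - y ^ 2) * Real.log (1 / y - 1)| ≤ 1 := by
  obtain ⟨h0, h1⟩ := hy
  have hlog : Real.log (1 / y - 1) = Real.log (1 - y) - Real.log y := by
    rw [← Real.log_div (by linarith) h0.ne']
    congr 1
    field_simp
  have hy' := Real.abs_log_mul_self_lt y h0 h1.le
  have h1y := Real.abs_log_mul_self_lt (1 - y) (by linarith) (by linarith)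
  calc |(y - y ^ 2) * Real.log (1 / y - 1)|
      = |y * (Real.log (1 - y) * (1 - y)) - (1 - y) * (Real.log y * y)| := by
        rw [hlog]; ring_nf
    _ ≤ y * |Real.log (1 - y) * (1 - y)| + (1 - y) * |Real.log y * y| := by
        refine (abs_sub _ _).trans (add_le_add ?_ ?_) <;>
          rw [abs_mul, abs_of_nonneg (by linarith)]
    _ ≤ y * 1 + (1 - y) * 1 := by gcongr
    _ = 1 := by ring

lemma abs_mulVec_apply_le (W : Matrix ι ι ℝ) {y : ι → ℝ} (hy : ∀ k, |y k| ≤ 1) (j : ι) :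
    |(W *ᵥ y) j| ≤ ∑ k, |W j k| :=
  (Finset.abs_sum_le_sum_abs _ _).trans <| Finset.sum_le_sum fun k _ => by
    rw [abs_mul]; exact mul_le_of_le_one_right (abs_nonneg _) (hy k)

lemma abs_binpacDrive_apply_le (hT : 0 < T) (hτ : 0 < τ) (W : Matrix ι ι ℝ)
    (v : ι → ℝ) {y : ι → ℝ} (hy : ∀ k, y k ∈ Ioo 0 1) (j : ι) :
    |binpacDrive W v T τ y j| ≤ ((∑ k, |W j k|) + |v j|) / T + 1 / τ := by
  have hs : 0 ≤ y j - y j ^ 2 := by nlinarith [(hy j).1, (hy j).2]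
  have hs1 : y j - y j ^ 2 ≤ 1 := by nlinarith [(hy j).1, (hy j).2]
  have hWy := abs_mulVec_apply_le W (fun k => abs_le.2 ⟨by linarith [(hy k).1], (hy k).2.le⟩) j
  calc |binpacDrive W v T τ y j|
      = |(y j - y j ^ 2) * ((W *ᵥ y) j + v j) / T
          + (y j - y j ^ 2) * Real.log (1 / y j - 1) / τ| := by
        rw [binpacDrive]; congr 1; field_simp
    _ ≤ (y j - y j ^ 2) * (|(W *ᵥ y) j| + |v j|) / T
          + |(y j - y j ^ 2) * Real.log (1 / y j - 1)| / τ := by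
        refine (abs_add_le _ _).trans (add_le_add ?_ ?_)
        · rw [abs_div, abs_mul, abs_of_nonneg hs, abs_of_pos hT]
          gcongr
          exact abs_add_le _ _
        · rw [abs_div, abs_of_pos hτ]
    _ ≤ 1 * ((∑ k, |W j k|) + |v j|) / T + 1 / τ := by
        gcongr
        exact abs_sub_sq_mul_log_inv_sub_one_le (hy j)
    _ = ((∑ k, |W j k|) + |v j|) / T + 1 / τ := by rw [one_mul]

lemma abs_PTinv_hopfieldHessian_apply_le (hm : 0 < m) (hT : 0 < T) (hτ : 0 < τ)
    (W : Matrix (Fin n) (Fin n) ℝ) {y : Fin n → ℝ} {i : Fin n} (hy : y i ∈ Ioo 0 1) (j : Fin n) :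
    |PTinv m (hopfieldHessian W T τ y) i j|
      ≤ (1 + (∑ k, |W i k|) / m) * (τ / T) * (y i - y i ^ 2) := by
  have hs : 0 < y i - y i ^ 2 := by nlinarith [hy.1, hy.2]
  have h := abs_PTinv_neg_add_smul_diagonal_apply_le hm W (T / τ) (fun k => 1 / (y k - y k ^ 2)) i j
  rw [abs_of_pos (by positivity), ← le_div_iff₀' (by positivity)] at h
  exact h.trans_eq (by field_simp)

lemma exists_abs_PTinv_mulVec_binpacDrive_le (hm : 0 < m) (hT : 0 < T) (hτ : 0 < τ)
    (W : Matrix (Fin n) (Fin n) ℝ) (v : Fin n → ℝ) :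
    ∃ K, 0 ≤ K ∧ ∀ y : Fin n → ℝ, (∀ k, y k ∈ Ioo 0 1) → ∀ i,
      |(PTinv m (hopfieldHessian W T τ y) *ᵥ binpacDrive W v T τ y) i| ≤ K * (y i - y i ^ 2) := by
  refine ⟨(1 + (∑ i, ∑ k, |W i k|) / m) * (τ / T) * ∑ j, (((∑ k, |W j k|) + |v j|) / T + 1 / τ),
    by positivity, fun y hy i => ?_⟩
  have hs : 0 ≤ y i - y i ^ 2 := by nlinarith [(hy i).1, (hy i).2]
  have hrow : ∑ k, |W i k| ≤ ∑ i, ∑ k, |W i k| :=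
    Finset.single_le_sum (fun i _ => Finset.sum_nonneg fun k _ => abs_nonneg (W i k))
      (Finset.mem_univ i)
  have hP : ∀ j, |PTinv m (hopfieldHessian W T τ y) i j|
      ≤ (1 + (∑ i, ∑ k, |W i k|) / m) * (τ / T) * (y i - y i ^ 2) := fun j =>
    (abs_PTinv_hopfieldHessian_apply_le hm hT hτ W (hy i) j).trans (by gcongr)
  calc |(PTinv m (hopfieldHessian W T τ y) *ᵥ binpacDrive W v T τ y) i|
      ≤ ∑ j, |PTinv m (hopfieldHessian W T τ y) i j| * |binpacDrive W v T τ y j| := by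
        simp only [mulVec, dotProduct, ← abs_mul]
        exact Finset.abs_sum_le_sum_abs _ _
    _ ≤ ∑ j, (1 + (∑ i, ∑ k, |W i k|) / m) * (τ / T) * (y i - y i ^ 2) *
          (((∑ k, |W j k|) + |v j|) / T + 1 / τ) :=
        Finset.sum_le_sum fun j _ => mul_le_mul (hP j) (abs_binpacDrive_apply_le hT hτ W v hy j)
          (abs_nonneg _) (by positivity)
    _ = _ := by rw [← Finset.mul_sum]; ring

end BinPAC

lemma pos_of_neg_mul_le_deriv {f f' : ℝ → ℝ} {K a b : ℝ} (hab : a ≤ b)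
    (hf : ContinuousOn f (Icc a b)) (hderiv : ∀ s ∈ Ioo a b, HasDerivAt f (f' s) s)
    (hge : ∀ s ∈ Ioo a b, -K * f s ≤ f' s) (ha : 0 < f a) : 0 < f b := by
  have hmono : MonotoneOn (fun s => Real.exp (K * s) * f s) (Icc a b) := by
    refine monotoneOn_of_hasDerivWithinAt_nonneg
      (f' := fun s => Real.exp (K * s) * (K * f s + f' s)) (convex_Icc a b)
      (((continuous_const.mul continuous_id).rexp).continuousOn.mul hf) (fun s hs => ?_)
      (fun s hs => ?_)
    · rw [interior_Icc] at hs
      exact (((hasDerivAt_id s).const_mul K).exp.mul (hderiv s hs)).hasDerivWithinAt.congr_deriv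
        (by simp only [id]; ring)
    · rw [interior_Icc] at hs
      exact mul_nonneg (Real.exp_pos _).le (by linarith [hge s hs])
  have := hmono (left_mem_Icc.2 hab) (right_mem_Icc.2 hab) hab
  exact pos_of_mul_pos_right ((mul_pos (Real.exp_pos _) ha).trans_le this) (Real.exp_pos _).le

lemma mem_Ioo_of_abs_deriv_le {g g' : ℝ → ℝ} {K a b : ℝ} (hab : a ≤ b) (hK : 0 ≤ K)
    (hg : ContinuousOn g (Icc a b)) (hderiv : ∀ s ∈ Ioo a b, HasDerivAt g (g' s) s)
    (hbound : ∀ s ∈ Ioo a b, |g' s| ≤ K * (g s - g s ^ 2)) (ha : g a ∈ Ioo 0 1) :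
    g b ∈ Ioo 0 1 := by
  constructor
  · refine pos_of_neg_mul_le_deriv (K := K) hab hg hderiv (fun s hs => ?_) ha.1
    nlinarith [hbound s hs, neg_abs_le (g' s), mul_nonneg hK (sq_nonneg (g s))]
  · refine sub_pos.1 (pos_of_neg_mul_le_deriv (f := fun s => 1 - g s) (f' := fun s => -g' s)
      (K := K) hab (continuousOn_const.sub hg) (fun s hs => (hderiv s hs).const_sub 1)
      (fun s hs => ?_) (sub_pos.2 ha.2))
    nlinarith [hbound s hs, le_abs_self (g' s), mul_nonneg hK (sq_nonneg (1 - g s))]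

lemma exists_first_exit {E : Type*} [TopologicalSpace E] {U : Set E} (hU : IsOpen U)
    {x : ℝ → E} {a b : ℝ} (hab : a ≤ b) (hx : ContinuousOn x (Icc a b)) (ha : x a ∈ U)
    (hb : x b ∉ U) : ∃ c ∈ Ioc a b, x c ∉ U ∧ ∀ s ∈ Ico a c, x s ∈ U := by
  set B := Icc a b ∩ x ⁻¹' Uᶜ
  have hbB : b ∈ B := ⟨right_mem_Icc.2 hab, hb⟩
  have hB : BddBelow B := ⟨a, fun s hs => hs.1.1⟩
  have hcB : sInf B ∈ B :=
    (hx.preimage_isClosed_of_isClosed isClosed_Icc hU.isClosed_compl).csInf_mem ⟨b, hbB⟩ hB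
  refine ⟨sInf B, ⟨lt_of_le_of_ne hcB.1.1 ?_, hcB.1.2⟩, hcB.2, fun s hs => ?_⟩
  · rintro hac
    exact hcB.2 (hac ▸ ha)
  · by_contra hsU
    exact (csInf_le hB ⟨⟨hs.1, hs.2.le.trans hcB.1.2⟩, hsU⟩).not_gt hs.2

theorem mem_Ioo_of_hasDerivWithinAt_of_abs_le {ι : Type*} [Fintype ι]
    {f : (ι → ℝ) → ι → ℝ} {K Tbar : ℝ} {x : ℝ → ι → ℝ} (hK : 0 ≤ K)
    (hf : ∀ y, (∀ i, y i ∈ Ioo 0 1) → ∀ i, |f y i| ≤ K * (y i - y i ^ 2))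
    (hsol : ∀ t ∈ Ico 0 Tbar, HasDerivWithinAt x (f (x t)) (Ico 0 Tbar) t)
    (hx0 : ∀ i, x 0 i ∈ Ioo 0 1) :
    ∀ t ∈ Ico 0 Tbar, ∀ i, x t i ∈ Ioo 0 1 := by
  have hcube : IsOpen (univ.pi fun _ : ι => Ioo (0 : ℝ) 1) :=
    isOpen_set_pi finite_univ fun _ _ => isOpen_Ioo
  intro t ht
  by_contra hxt
  have hsub : Icc 0 t ⊆ Ico 0 Tbar := Icc_subset_Ico_right ht.2
  have hx : ContinuousOn x (Icc 0 t) := fun s hs =>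
    (hsol s (hsub hs)).continuousWithinAt.mono hsub
  obtain ⟨c, hc, hxc, hbefore⟩ := exists_first_exit hcube ht.1 hx (mem_univ_pi.2 hx0)
    (fun h => hxt (mem_univ_pi.1 h))
  refine hxc (mem_univ_pi.2 fun i => mem_Ioo_of_abs_deriv_le hc.1.le hK
    ((continuous_apply i).comp_continuousOn (hx.mono (Icc_subset_Icc_right hc.2)))
    (fun s hs => ?_) (fun s hs => hf _ (mem_univ_pi.1 (hbefore s (Ioo_subset_Ico_self hs))) i)
    (hx0 i))
  have hs' : Ico 0 Tbar ∈ nhds s := Ico_mem_nhds_iff.2 ⟨hs.1, hs.2.trans (hc.2.trans_lt ht.2)⟩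
  exact hasDerivAt_pi.1 ((hsol s (mem_of_mem_nhds hs')).hasDerivAt hs') i

theorem binpac_forward_invariance_general
    (n : ℕ)
    (T τ m : ℝ) (hT : 0 < T) (hτ : 0 < τ) (hm : 0 < m)
    (W : Matrix (Fin n) (Fin n) ℝ)
    (v : Fin n → ℝ)
    -- Hessian of the Hopfield energy on the open hypercube
    (H : (Fin n → ℝ) → Matrix (Fin n) (Fin n) ℝ)
    (hH : H = fun x => -W + (T / τ) • Matrix.diagonal (fun i => 1 / (x i - x i ^ 2)))
    -- the BinPAC vector field
    (vf : (Fin n → ℝ) → (Fin n → ℝ))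
    (hvf : vf = fun x => PTinv m (H x) *ᵥ fun i =>
      (x i - x i ^ 2) / T *
        ((W *ᵥ x) i + v i + (T / τ) * Real.log (1 / x i - 1)))
    -- a solution on [0, T̄)
    (Tbar : ℝ) (x : ℝ → Fin n → ℝ)
    (hsol : ∀ t ∈ Set.Ico (0 : ℝ) Tbar,
      HasDerivWithinAt x (vf (x t)) (Set.Ico (0 : ℝ) Tbar) t)
    (hx0 : ∀ i, x 0 i ∈ Set.Ioo (0 : ℝ) 1) :
    ∀ t ∈ Set.Ico (0 : ℝ) Tbar, ∀ i, x t i ∈ Set.Ioo (0 : ℝ) 1 := by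
  subst hH hvf
  obtain ⟨K, hK, hbound⟩ := exists_abs_PTinv_mulVec_binpacDrive_le hm hT hτ W v
  exact mem_Ioo_of_hasDerivWithinAt_of_abs_le hK hbound hsol hx0

/-- **Forward invariance of the open hypercube under the BinPAC dynamics**
(Lemma: Forward Invariance of the Open Hypercube). Every solution of the BinPAC
dynamics starting in `(0,1)ⁿ` remains in `(0,1)ⁿ` on its interval of existence. -/
theorem binpac_forward_invariance
    (n : ℕ) (a b p : Fin n → ℝ)
    (γ T τ m : ℝ) (hγ : 0 < γ) (hT : 0 < T) (hτ : 0 < τ) (hm : 0 < m)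
    (Pr : ℝ)
    (W : Matrix (Fin n) (Fin n) ℝ)
    (hW : W = -(Matrix.diagonal a) - γ • Matrix.vecMulVec p p)
    (v : Fin n → ℝ) (hv : v = fun i => a i * b i + γ * Pr * p i)
    -- Hessian of the Hopfield energy on the open hypercube
    (H : (Fin n → ℝ) → Matrix (Fin n) (Fin n) ℝ)
    (hH : H = fun x => -W + (T / τ) • Matrix.diagonal (fun i => 1 / (x i - x i ^ 2)))
    -- the BinPAC vector field
    (vf : (Fin n → ℝ) → (Fin n → ℝ))
    (hvf : vf = fun x => PTinv m (H x) *ᵥ fun i =>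
      (x i - x i ^ 2) / T *
        ((W *ᵥ x) i + v i + (T / τ) * Real.log (1 / x i - 1)))
    -- a solution on [0, T̄)
    (Tbar : ℝ) (x : ℝ → Fin n → ℝ)
    (hsol : ∀ t ∈ Set.Ico (0 : ℝ) Tbar,
      HasDerivWithinAt x (vf (x t)) (Set.Ico (0 : ℝ) Tbar) t)
    (hx0 : ∀ i, x 0 i ∈ Set.Ioo (0 : ℝ) 1) :
    ∀ t ∈ Set.Ico (0 : ℝ) Tbar, ∀ i, x t i ∈ Set.Ioo (0 : ℝ) 1 :=
  binpac_forward_invariance_general n T τ m hT hτ hm W v H hH vf hvf Tbar x hsol hx0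
end

section
/- Fix x ∈ [0,1]^n and κ ∈ ℝ, and let Y = {y ∈ ℝ^n : 1_n^⊤ y = κ}. The function y ↦ f̃(x,y) = Σ_i f_i(x_i) + (γ/2)‖(p_i x_i)_i + Ly − (P_r/n)1_n‖² has a unique minimizer y* over Y; y* is characterized as the unique element of Y satisfying L y* = −(p_i x_i)_i + ((p^⊤ x)/n) 1_n, equivalently the unique element of Y with L((p_i x_i)_i + L y*) = 0; and y* is also the unique point of Y at which the auxiliary dynamics ẏ = −αγ L((p_i x_i)_i + Ly) vanish. -/
/-!
Since `L` is symmetric with `L 1 = 0`, its range lies in the hyperplane `1ᵀv = 0`, and by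
rank–nullity (`ker L = span 1`) it is that hyperplane. So `L y = -(pᵢxᵢ)ᵢ + (pᵀx / n) 1` is
solvable, its solutions differ by constants, and exactly one of them, `y*`, lies in `Y`.
The residual `(pᵢxᵢ)ᵢ + L y* - (P_r / n) 1` is then constant, hence orthogonal to every
`L (y - y*)`, which gives `f̃(x, y) = f̃(x, y*) + (γ / 2) ‖L (y - y*)‖²`: minimality, and
uniqueness because `L (y - y*) = 0` forces `y = y*` on `Y`. The other characterizations
reduce to this one because `L w = 0` exactly when `w` is constant.
-/

open Matrix

namespace Matrix

section Laplacian

variable {ι : Type*} [Fintype ι] {L : Matrix ι ι ℝ}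

theorem sum_mulVec_eq_zero_of_isSymm (hsymm : L.IsSymm) (h1 : L *ᵥ (fun _ => 1) = 0)
    (v : ι → ℝ) : ∑ i, (L *ᵥ v) i = 0 := by
  rw [← one_dotProduct, dotProduct_mulVec, ← mulVec_transpose, hsymm.eq]
  exact zero_dotProduct v ▸ congrArg (· ⬝ᵥ v) h1

theorem ker_mulVecLin_eq_span_one (h1 : L *ᵥ (fun _ => 1) = 0)
    (hker : ∀ v : ι → ℝ, L *ᵥ v = 0 → ∃ c : ℝ, v = fun _ => c) :
    LinearMap.ker L.mulVecLin = ℝ ∙ (fun _ => 1) := by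
  ext v
  refine ⟨fun hv => ?_, fun hv => ?_⟩
  · obtain ⟨c, rfl⟩ := hker v hv
    exact Submodule.mem_span_singleton.mpr ⟨c, funext fun _ => mul_one c⟩
  · obtain ⟨c, rfl⟩ := Submodule.mem_span_singleton.mp hv
    simp [h1]

theorem range_mulVecLin_eq_ker_sum [Nonempty ι] (hsymm : L.IsSymm)
    (h1 : L *ᵥ (fun _ => 1) = 0) (hker : ∀ v : ι → ℝ, L *ᵥ v = 0 → ∃ c : ℝ, v = fun _ => c) :
    LinearMap.range L.mulVecLin =
      LinearMap.ker (∑ i, LinearMap.proj i : Module.Dual ℝ (ι → ℝ)) := by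
  set s : Module.Dual ℝ (ι → ℝ) := ∑ i, LinearMap.proj i
  have hs : s ≠ 0 := fun h => by
    simpa [s] using LinearMap.congr_fun h (fun _ => (1 : ℝ) / Fintype.card ι)
  have hrange : Module.finrank ℝ (LinearMap.range L.mulVecLin) + 1 = Fintype.card ι := by
    have hone : (fun _ => (1 : ℝ)) ≠ 0 := fun h =>
      one_ne_zero (congrFun h (Classical.arbitrary ι))
    rw [← finrank_span_singleton (K := ℝ) hone, ← ker_mulVecLin_eq_span_one h1 hker,
      LinearMap.finrank_range_add_finrank_ker, Module.finrank_fintype_fun_eq_card]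
  refine Submodule.eq_of_le_of_finrank_eq ?_ ?_
  · rintro _ ⟨v, rfl⟩
    simpa [s] using sum_mulVec_eq_zero_of_isSymm hsymm h1 v
  · have := Module.Dual.finrank_ker_add_one_of_ne_zero hs
    rw [Module.finrank_fintype_fun_eq_card] at this
    omega

theorem exists_sum_eq_and_mulVec_eq [Nonempty ι] (hsymm : L.IsSymm)
    (h1 : L *ᵥ (fun _ => 1) = 0) (hker : ∀ v : ι → ℝ, L *ᵥ v = 0 → ∃ c : ℝ, v = fun _ => c)
    {b : ι → ℝ} (hb : ∑ i, b i = 0) (κ : ℝ) : ∃ y, ∑ i, y i = κ ∧ L *ᵥ y = b := by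
  obtain ⟨y₀, hy₀⟩ : b ∈ LinearMap.range L.mulVecLin := by
    rw [range_mulVecLin_eq_ker_sum hsymm h1 hker]
    simpa using hb
  refine ⟨y₀ + ((κ - ∑ i, y₀ i) / Fintype.card ι) • (fun _ => 1), ?_, ?_⟩
  · have hcard : (Fintype.card ι : ℝ) ≠ 0 := Nat.cast_ne_zero.mpr Fintype.card_ne_zero
    simp [Finset.sum_add_distrib, mul_div_cancel₀ _ hcard]
  · simpa [mulVec_add, mulVec_smul, h1] using hy₀

theorem eq_of_mulVec_eq_of_sum_eq [Nonempty ι]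
    (hker : ∀ v : ι → ℝ, L *ᵥ v = 0 → ∃ c : ℝ, v = fun _ => c) {y y' : ι → ℝ}
    (hL : L *ᵥ y = L *ᵥ y') (hs : ∑ i, y i = ∑ i, y' i) : y = y' := by
  obtain ⟨c, hc⟩ := hker (y - y') (by rw [mulVec_sub, hL, sub_self])
  have hc0 : c = 0 := by
    have := congrArg (fun v => ∑ i, v i) hc
    simpa [Finset.sum_sub_distrib, hs] using this
  rw [← sub_eq_zero, hc, hc0]
  rfl

theorem mulVec_add_mulVec_eq_zero_iff [Nonempty ι] (hsymm : L.IsSymm)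
    (h1 : L *ᵥ (fun _ => 1) = 0) (hker : ∀ v : ι → ℝ, L *ᵥ v = 0 → ∃ c : ℝ, v = fun _ => c)
    (q y : ι → ℝ) :
    L *ᵥ (fun i => q i + (L *ᵥ y) i) = 0 ↔
      L *ᵥ y = fun i => -q i + (∑ j, q j) / Fintype.card ι := by
  constructor
  · intro h
    obtain ⟨c, hc⟩ := hker _ h
    have hsum : ∑ j, q j = Fintype.card ι * c := by
      have := congrArg (fun v => ∑ i, v i) hc
      simpa [Finset.sum_add_distrib, sum_mulVec_eq_zero_of_isSymm hsymm h1] using this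
    funext i
    rw [hsum, mul_div_cancel_left₀ _ (Nat.cast_ne_zero.mpr Fintype.card_ne_zero)]
    linarith [congrFun hc i]
  · intro h
    have hconst :
        (fun i => q i + (L *ᵥ y) i) = ((∑ j, q j) / Fintype.card ι) • fun _ => 1 := by
      funext i
      simp [h]
    rw [hconst, mulVec_smul, h1, smul_zero]

theorem sum_const_add_sq_eq (c : ℝ) {d : ι → ℝ} (hd : ∑ i, d i = 0) :
    ∑ i, (c + d i) ^ 2 = Fintype.card ι * c ^ 2 + d ⬝ᵥ d := by
  simp only [add_sq, Finset.sum_add_distrib, ← Finset.mul_sum, hd]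
  simp [dotProduct, sq]

theorem sum_add_mulVec_sub_sq_eq (hsymm : L.IsSymm) (h1 : L *ᵥ (fun _ => 1) = 0)
    {q y : ι → ℝ} {c : ℝ} (hy : L *ᵥ y = fun i => -q i + c) (P : ℝ) (y' : ι → ℝ) :
    ∑ i, (q i + (L *ᵥ y') i - P) ^ 2 =
      Fintype.card ι * (c - P) ^ 2 + (L *ᵥ (y' - y)) ⬝ᵥ (L *ᵥ (y' - y)) := by
  have hsplit : ∀ i, q i + (L *ᵥ y') i - P = (c - P) + (L *ᵥ (y' - y)) i := by
    intro i
    simp only [mulVec_sub, hy, Pi.sub_apply]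
    ring
  simp_rw [hsplit]
  exact sum_const_add_sq_eq _ (sum_mulVec_eq_zero_of_isSymm hsymm h1 _)

end Laplacian

end Matrix

theorem binpad_closed_form_auxiliary_solution_general
    (n : ℕ) (hn : 2 ≤ n)
    (L : Matrix (Fin n) (Fin n) ℝ)
    (hLsymm : L.IsSymm)
    (hL1 : L *ᵥ (fun _ => (1 : ℝ)) = 0)
    (hLker : ∀ v : Fin n → ℝ, L *ᵥ v = 0 → ∃ c : ℝ, v = fun _ => c)
    (f : Fin n → ℝ → ℝ) (p : Fin n → ℝ) (γ α : ℝ) (hγ : 0 < γ) (hα : 0 < α)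
    (Pr κ : ℝ)
    (Ftil : (Fin n → ℝ) → (Fin n → ℝ) → ℝ)
    (hFtil : Ftil = fun x y => (∑ i, f i (x i)) +
      γ / 2 * ∑ i, (p i * x i + (L *ᵥ y) i - Pr / n) ^ 2)
    (x : Fin n → ℝ) :
    ∃ ystar : Fin n → ℝ,
      (∑ i, ystar i = κ) ∧
      -- y* minimizes y ↦ f̃(x,y) over Y, uniquely
      (∀ y : Fin n → ℝ, ∑ i, y i = κ → Ftil x ystar ≤ Ftil x y) ∧
      (∀ y' : Fin n → ℝ, ∑ i, y' i = κ →
        (∀ y : Fin n → ℝ, ∑ i, y i = κ → Ftil x y' ≤ Ftil x y) → y' = ystar) ∧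
      -- characterization: the unique element of Y with Ly* = -(pᵢxᵢ)ᵢ + ((pᵀx)/n)1
      (L *ᵥ ystar = fun i => -(p i * x i) + (p ⬝ᵥ x) / n) ∧
      (∀ y' : Fin n → ℝ, ∑ i, y' i = κ →
        (L *ᵥ y' = fun i => -(p i * x i) + (p ⬝ᵥ x) / n) → y' = ystar) ∧
      -- equivalently: the unique element of Y with L((pᵢxᵢ)ᵢ + Ly*) = 0
      (L *ᵥ (fun i => p i * x i + (L *ᵥ ystar) i) = 0) ∧
      (∀ y' : Fin n → ℝ, ∑ i, y' i = κ →
        L *ᵥ (fun i => p i * x i + (L *ᵥ y') i) = 0 → y' = ystar) ∧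
      -- y* is the unique point of Y where the auxiliary dynamics vanish
      (-(α * γ) • (L *ᵥ fun i => p i * x i + (L *ᵥ ystar) i) = 0) ∧
      (∀ y' : Fin n → ℝ, ∑ i, y' i = κ →
        -(α * γ) • (L *ᵥ fun i => p i * x i + (L *ᵥ y') i) = 0 → y' = ystar) := by
  have : Nonempty (Fin n) := ⟨⟨0, by omega⟩⟩
  have hn0 : (n : ℝ) ≠ 0 := Nat.cast_ne_zero.mpr (by omega)
  have hchar (y : Fin n → ℝ) : L *ᵥ (fun i => p i * x i + (L *ᵥ y) i) = 0 ↔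
      L *ᵥ y = fun i => -(p i * x i) + (p ⬝ᵥ x) / n := by
    simpa [dotProduct] using
      mulVec_add_mulVec_eq_zero_iff hLsymm hL1 hLker (fun i => p i * x i) y
  obtain ⟨ystar, hsum, hLy⟩ := exists_sum_eq_and_mulVec_eq hLsymm hL1 hLker
    (b := fun i => -(p i * x i) + (p ⬝ᵥ x) / n)
    (by simp [Finset.sum_add_distrib, dotProduct, mul_div_cancel₀ _ hn0]) κ
  have huniq (y : Fin n → ℝ) (hy : ∑ i, y i = κ) (hLy' : L *ᵥ y = L *ᵥ ystar) : y = ystar :=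
    eq_of_mulVec_eq_of_sum_eq hLker hLy' (hy.trans hsum.symm)
  have hFtil_eq (y : Fin n → ℝ) : Ftil x y = Ftil x ystar +
      γ / 2 * ((L *ᵥ (y - ystar)) ⬝ᵥ (L *ᵥ (y - ystar))) := by
    simp only [hFtil, sum_add_mulVec_sub_sq_eq hLsymm hL1 hLy, sub_self, mulVec_zero,
      dotProduct_zero]
    ring
  have hD (y : Fin n → ℝ) : 0 ≤ (L *ᵥ (y - ystar)) ⬝ᵥ (L *ᵥ (y - ystar)) :=
    Finset.sum_nonneg fun i _ => mul_self_nonneg _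
  have hdyn (y : Fin n → ℝ) : -(α * γ) • (L *ᵥ fun i => p i * x i + (L *ᵥ y) i) = 0 ↔
      L *ᵥ (fun i => p i * x i + (L *ᵥ y) i) = 0 :=
    smul_eq_zero_iff_right (neg_ne_zero.mpr (by positivity))
  refine ⟨ystar, hsum, fun y _ => ?_, fun y hy hmin => ?_, hLy,
    fun y hy h => huniq y hy (h.trans hLy.symm), (hchar ystar).2 hLy,
    fun y hy h => huniq y hy (((hchar y).1 h).trans hLy.symm),
    (hdyn ystar).2 ((hchar ystar).2 hLy),
    fun y hy h => huniq y hy (((hchar y).1 ((hdyn y).1 h)).trans hLy.symm)⟩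
  · rw [hFtil_eq y]
    exact le_add_of_nonneg_right (mul_nonneg (by positivity) (hD y))
  · have hle := hmin ystar hsum
    rw [hFtil_eq y] at hle
    have hzero : (L *ᵥ (y - ystar)) ⬝ᵥ (L *ᵥ (y - ystar)) = 0 :=
      le_antisymm (by nlinarith) (hD y)
    rw [dotProduct_self_eq_zero, mulVec_sub, sub_eq_zero] at hzero
    exact huniq y hy hzero

/-- **Closed-form auxiliary solution** (Lemma: Closed Form Auxiliary Solution).
For fixed `x ∈ [0,1]ⁿ`, the map `y ↦ f̃(x,y)` has a unique minimizer `y*` over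
`Y = {y : 1ᵀy = κ}`, characterized as the unique element of `Y` with
`Ly* = -(pᵢxᵢ)ᵢ + ((pᵀx)/n)1`, equivalently the unique element of `Y` with
`L((pᵢxᵢ)ᵢ + Ly*) = 0`; `y*` is also the unique point of `Y` at which the auxiliary
dynamics `ẏ = -αγL((pᵢxᵢ)ᵢ + Ly)` vanish. -/
theorem binpad_closed_form_auxiliary_solution
    (n : ℕ) (hn : 2 ≤ n)
    (L : Matrix (Fin n) (Fin n) ℝ)
    (hLsymm : L.IsSymm) (hLpsd : L.PosSemidef)
    (hL1 : L *ᵥ (fun _ => (1 : ℝ)) = 0)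
    (hLker : ∀ v : Fin n → ℝ, L *ᵥ v = 0 → ∃ c : ℝ, v = fun _ => c)
    (f : Fin n → ℝ → ℝ) (p : Fin n → ℝ) (γ α : ℝ) (hγ : 0 < γ) (hα : 0 < α)
    (Pr κ : ℝ)
    (Ftil : (Fin n → ℝ) → (Fin n → ℝ) → ℝ)
    (hFtil : Ftil = fun x y => (∑ i, f i (x i)) +
      γ / 2 * ∑ i, (p i * x i + (L *ᵥ y) i - Pr / n) ^ 2)
    (x : Fin n → ℝ) (hx : ∀ i, x i ∈ Set.Icc (0 : ℝ) 1) :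
    ∃ ystar : Fin n → ℝ,
      (∑ i, ystar i = κ) ∧
      -- y* minimizes y ↦ f̃(x,y) over Y, uniquely
      (∀ y : Fin n → ℝ, ∑ i, y i = κ → Ftil x ystar ≤ Ftil x y) ∧
      (∀ y' : Fin n → ℝ, ∑ i, y' i = κ →
        (∀ y : Fin n → ℝ, ∑ i, y i = κ → Ftil x y' ≤ Ftil x y) → y' = ystar) ∧
      -- characterization: the unique element of Y with Ly* = -(pᵢxᵢ)ᵢ + ((pᵀx)/n)1
      (L *ᵥ ystar = fun i => -(p i * x i) + (p ⬝ᵥ x) / n) ∧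
      (∀ y' : Fin n → ℝ, ∑ i, y' i = κ →
        (L *ᵥ y' = fun i => -(p i * x i) + (p ⬝ᵥ x) / n) → y' = ystar) ∧
      -- equivalently: the unique element of Y with L((pᵢxᵢ)ᵢ + Ly*) = 0
      (L *ᵥ (fun i => p i * x i + (L *ᵥ ystar) i) = 0) ∧
      (∀ y' : Fin n → ℝ, ∑ i, y' i = κ →
        L *ᵥ (fun i => p i * x i + (L *ᵥ y') i) = 0 → y' = ystar) ∧
      -- y* is the unique point of Y where the auxiliary dynamics vanish
      (-(α * γ) • (L *ᵥ fun i => p i * x i + (L *ᵥ ystar) i) = 0) ∧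
      (∀ y' : Fin n → ℝ, ∑ i, y' i = κ →
        -(α * γ) • (L *ᵥ fun i => p i * x i + (L *ᵥ y') i) = 0 → y' = ystar) :=
  binpad_closed_form_auxiliary_solution_general n hn L hLsymm hL1 hLker f p γ α hγ hα Pr κ Ftil
    hFtil x
end
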